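/- arXiv:2508.10773 — 8 statements merged into one kernel-verified Lean document; each statement's English description precedes it below -/
import Mathlib

section
/- For any real n-vector μ such that σ_q(μ) ≥ 0 for all q ∈ {1,...,p}, and any ε > 0, the shifted vector (μ_1+ε, ..., μ_n+ε) satisfies σ_q > 0 for all q ∈ {1,...,p}. Consequently, the closure of the p-th Gårding cone Γ_p equals {μ ∈ ℝ^n | σ_q(μ) ≥ 0 for all q ∈ {1,...,p}}. -/
/-- The `p`-th elementary symmetric polynomial of `μ : Fin n → ℝ`. -/
noncomputable def esymm (n p : ℕ) (μ : Fin n → ℝ) : ℝ :=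
  ∑ t ∈ Finset.powersetCard p Finset.univ, ∏ i ∈ t, μ i

/-- The `p`-th Gårding cone in `ℝⁿ`. -/
def gardingCone (n p : ℕ) : Set (Fin n → ℝ) :=
  {μ | ∀ q, 1 ≤ q → q ≤ p → 0 < esymm n q μ}

open Finset

lemma count_supersets {n q : ℕ} (s : Finset (Fin n)) (hs : s.card ≤ q) :
    ((Finset.powersetCard q (Finset.univ : Finset (Fin n))).filter (fun t => s ⊆ t)).card
      = Nat.choose (n - s.card) (q - s.card) := by
  have key : ((Finset.powersetCard q (Finset.univ : Finset (Fin n))).filter (fun t => s ⊆ t)).card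
      = (Finset.powersetCard (q - s.card) (Finset.univ \ s)).card := by
    apply Finset.card_bij' (fun t _ => t \ s) (fun u _ => u ∪ s)
    · intro t ht
      simp only [Finset.mem_filter, Finset.mem_powersetCard] at ht
      obtain ⟨⟨_, hcard⟩, hsub⟩ := ht
      rw [Finset.mem_powersetCard]
      refine ⟨Finset.sdiff_subset_sdiff (Finset.subset_univ t) le_rfl, ?_⟩
      rw [Finset.card_sdiff_of_subset hsub, hcard]
    · intro u hu
      rw [Finset.mem_powersetCard] at hu
      obtain ⟨hsub, hcard⟩ := hu
      have hdisj : Disjoint u s := (Finset.subset_sdiff.mp hsub).2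
      simp only [Finset.mem_filter, Finset.mem_powersetCard]
      refine ⟨⟨Finset.subset_univ _, ?_⟩, Finset.subset_union_right⟩
      rw [Finset.card_union_of_disjoint hdisj, hcard]
      omega
    · intro t ht
      simp only [Finset.mem_filter, Finset.mem_powersetCard] at ht
      exact Finset.sdiff_union_of_subset ht.2
    · intro u hu
      rw [Finset.mem_powersetCard] at hu
      have hdisj : Disjoint u s := (Finset.subset_sdiff.mp hu.1).2
      rw [Finset.union_sdiff_distrib, Finset.sdiff_self, Finset.union_empty,
        Finset.sdiff_eq_self_of_disjoint hdisj]
  rw [key, Finset.card_powersetCard, Finset.card_sdiff_of_subset (Finset.subset_univ s),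
    Finset.card_univ, Fintype.card_fin]

lemma esymm_shift {n : ℕ} (q : ℕ) (hqn : q ≤ n) (μ : Fin n → ℝ) (ε : ℝ) :
    esymm n q (fun i => μ i + ε) =
      ∑ r ∈ Finset.range (q + 1),
        (Nat.choose (n - r) (q - r) : ℝ) * ε ^ (q - r) * esymm n r μ := by
  have step1 : esymm n q (fun i => μ i + ε) =
      ∑ t ∈ Finset.powersetCard q (Finset.univ : Finset (Fin n)),
        ∑ s ∈ t.powerset, (∏ i ∈ s, μ i) * ε ^ (q - s.card) := by
    unfold esymm
    refine Finset.sum_congr rfl fun t ht => ?_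
    rw [Finset.prod_add]
    refine Finset.sum_congr rfl fun s hs => ?_
    rw [Finset.prod_const, Finset.card_sdiff_of_subset (Finset.mem_powerset.mp hs),
      (Finset.mem_powersetCard.mp ht).2]
  have step2 : esymm n q (fun i => μ i + ε) =
      ∑ s ∈ (Finset.univ : Finset (Fin n)).powerset,
        ∑ t ∈ (Finset.powersetCard q (Finset.univ : Finset (Fin n))).filter (fun t => s ⊆ t),
          (∏ i ∈ s, μ i) * ε ^ (q - s.card) := by
    rw [step1]
    apply Finset.sum_comm'
    intro t s
    simp only [Finset.mem_powerset, Finset.mem_filter, Finset.mem_powersetCard]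
    constructor
    · rintro ⟨⟨h1, h2⟩, h3⟩; exact ⟨⟨⟨h1, h2⟩, h3⟩, Finset.subset_univ _⟩
    · rintro ⟨⟨⟨h1, h2⟩, h3⟩, _⟩; exact ⟨⟨h1, h2⟩, h3⟩
  have step3 : esymm n q (fun i => μ i + ε) =
      ∑ s ∈ (Finset.univ : Finset (Fin n)).powerset,
        ((((Finset.powersetCard q (Finset.univ : Finset (Fin n))).filter
            (fun t => s ⊆ t)).card : ℝ)) * ((∏ i ∈ s, μ i) * ε ^ (q - s.card)) := by
    rw [step2]
    refine Finset.sum_congr rfl fun s _ => ?_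
    rw [Finset.sum_const, nsmul_eq_mul]
  rw [step3, Finset.sum_powerset, Finset.card_univ, Fintype.card_fin]
  rw [← Finset.sum_subset (Finset.range_subset_range.mpr (by omega : q + 1 ≤ n + 1))]
  · refine Finset.sum_congr rfl fun r hr => ?_
    rw [Finset.mem_range] at hr
    have hr' : r ≤ q := by omega
    unfold esymm
    rw [Finset.mul_sum]
    refine Finset.sum_congr rfl fun s hs => ?_
    have hcard : s.card = r := (Finset.mem_powersetCard.mp hs).2
    rw [count_supersets s (by omega), hcard]
    ring
  · intro r hr hr'
    rw [Finset.mem_range] at hr hr'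
    apply Finset.sum_eq_zero
    intro s hs
    have hcard : s.card = r := (Finset.mem_powersetCard.mp hs).2
    have : ((Finset.powersetCard q (Finset.univ : Finset (Fin n))).filter
        (fun t => s ⊆ t)) = ∅ := by
      rw [Finset.filter_eq_empty_iff]
      intro t ht hsub
      have := Finset.card_le_card hsub
      rw [(Finset.mem_powersetCard.mp ht).2] at this
      omega
    rw [this]
    simp

lemma esymm_zero {n : ℕ} (μ : Fin n → ℝ) : esymm n 0 μ = 1 := by
  simp [esymm]

lemma key_pos (n p : ℕ) (hpn : p ≤ n) :
    ∀ μ : Fin n → ℝ, (∀ q, 1 ≤ q → q ≤ p → 0 ≤ esymm n q μ) →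
      ∀ ε : ℝ, 0 < ε → ∀ q, 1 ≤ q → q ≤ p → 0 < esymm n q (fun i => μ i + ε) := by
  intro μ hμ ε hε q hq1 hqp
  rw [esymm_shift q (le_trans hqp hpn) μ ε]
  apply Finset.sum_pos'
  · intro r hr
    rw [Finset.mem_range] at hr
    rcases Nat.eq_zero_or_pos r with h0 | hpos
    · subst h0
      rw [esymm_zero]
      positivity
    · have : 0 ≤ esymm n r μ := hμ r hpos (by omega)
      positivity
  · refine ⟨0, Finset.mem_range.mpr (by omega), ?_⟩
    rw [esymm_zero, Nat.sub_zero, Nat.sub_zero, mul_one]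
    have hch : 0 < Nat.choose n q := Nat.choose_pos (le_trans hqp hpn)
    positivity

theorem stmt_0 (n p : ℕ) (hn : 1 ≤ n) (hp : 1 ≤ p) (hpn : p ≤ n) :
    (∀ μ : Fin n → ℝ, (∀ q, 1 ≤ q → q ≤ p → 0 ≤ esymm n q μ) →
      ∀ ε : ℝ, 0 < ε → ∀ q, 1 ≤ q → q ≤ p → 0 < esymm n q (fun i => μ i + ε)) ∧
    closure (gardingCone n p) = {μ : Fin n → ℝ | ∀ q, 1 ≤ q → q ≤ p → 0 ≤ esymm n q μ} := by
  have hcont : ∀ q, Continuous (esymm n q) := by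
    intro q
    unfold esymm
    exact continuous_finset_sum _ (fun t _ => continuous_finset_prod _ (fun i _ => continuous_apply i))
  refine ⟨key_pos n p hpn, ?_⟩
  apply Set.Subset.antisymm
  · apply closure_minimal
    · intro μ hμ q hq1 hqp
      exact (hμ q hq1 hqp).le
    · have heq : {μ : Fin n → ℝ | ∀ q, 1 ≤ q → q ≤ p → 0 ≤ esymm n q μ} =
          ⋂ q, ⋂ (_ : 1 ≤ q), ⋂ (_ : q ≤ p), {μ | 0 ≤ esymm n q μ} := by
        ext μ; simp [Set.mem_iInter]
      rw [heq]
      exact isClosed_iInter fun q => isClosed_iInter fun _ => isClosed_iInter fun _ =>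
        isClosed_le continuous_const (hcont q)
  · intro μ hμ
    have htend : Filter.Tendsto (fun k : ℕ => fun i => μ i + 1 / (k + 1 : ℝ))
        Filter.atTop (nhds μ) := by
      rw [tendsto_pi_nhds]
      intro i
      have h1 : Filter.Tendsto (fun k : ℕ => μ i + 1 / (k + 1 : ℝ)) Filter.atTop
          (nhds (μ i + 0)) :=
        tendsto_const_nhds.add tendsto_one_div_add_atTop_nhds_zero_nat
      simpa using h1
    refine mem_closure_of_tendsto htend (Filter.Eventually.of_forall fun k => ?_)
    intro q hq1 hqp
    exact key_pos n p hpn μ hμ (1 / (k + 1 : ℝ)) (by positivity) q hq1 hqp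
end

section
/- Let n ≥ 2, p ∈ {2,...,n}, and μ ∈ Γ_p with μ_1 ≤ μ_2 ≤ ... ≤ μ_n. Then μ_1 > -((n-p)/(p(n-1))) Σ_{j=2}^n μ_j, and in particular μ_1 > -((n-p)/p) μ_n. -/
open Polynomial Nat

namespace Multiset

section CommSemiring

variable {R : Type*} [CommSemiring R]

@[simp]
theorem esymm_zero (s : Multiset R) : s.esymm 0 = 1 := by
  simp [esymm]

theorem esymm_one (s : Multiset R) : s.esymm 1 = s.sum := by
  simp [esymm, powersetCard_one]

theorem esymm_eq_zero_of_card_lt {s : Multiset R} {k : ℕ} (h : card s < k) : s.esymm k = 0 := by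
  simp [esymm, powersetCard_eq_empty k h]

theorem esymm_cons (a : R) (s : Multiset R) (k : ℕ) :
    (a ::ₘ s).esymm (k + 1) = s.esymm (k + 1) + a * s.esymm k := by
  simp [esymm, powersetCard_cons, map_map, sum_map_mul_left]

end CommSemiring

theorem esymm_pos {s : Multiset ℝ} (hs : ∀ a ∈ s, 0 < a) {k : ℕ} (hk : k ≤ card s) :
    0 < s.esymm k := by
  have hne : powersetCard k s ≠ 0 := by
    rw [← card_pos, card_powersetCard]
    exact Nat.choose_pos hk
  simpa [esymm] using sum_lt_sum_of_nonempty (f := fun _ => (0 : ℝ)) hne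
    (fun t ht => prod_pos fun a ha => hs a (mem_of_le (mem_powersetCard.1 ht).1 ha))

theorem esymm_newton_of_card_eq_add_two {s : Multiset ℝ} {k : ℕ} (hs : card s = k + 2) :
    2 * (k + 2) * (s.esymm (k + 2) * s.esymm k) ≤ (k + 1) * s.esymm (k + 1) ^ 2 := by
  induction k generalizing s with
  | zero =>
    obtain ⟨x, y, rfl⟩ := card_eq_two.1 hs
    norm_num [insert_eq_cons]
    nlinarith [sq_nonneg (x - y)]
  | succ k ih =>
    obtain ⟨a, t, rfl⟩ : ∃ a t, s = a ::ₘ t := by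
      obtain ⟨a, ha⟩ := card_pos_iff_exists_mem.1 (by omega : 0 < card s)
      exact ⟨a, exists_cons_of_mem ha⟩
    have ht : card t = k + 2 := by simpa using hs
    have hIH := ih ht
    rw [esymm_cons, esymm_cons, show k + 1 + 1 = k + 2 by ring, esymm_cons,
      esymm_eq_zero_of_card_lt (by omega : card t < k + 1 + 2)]
    push_cast at hIH ⊢
    set A := t.esymm (k + 2)
    set B := t.esymm (k + 1)
    set C := t.esymm k
    -- `(k + 2) * (rhs - lhs) = ((k + 2) A - a B)² + (k + 3) a² ((k + 1) B² - 2 (k + 2) A C)`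
    nlinarith [sq_nonneg ((k + 2) * A - a * B), mul_nonneg (sq_nonneg a) (sub_nonneg.2 hIH)]

end Multiset

namespace Polynomial

theorem Splits.derivative {p : ℝ[X]} (hp : p.Splits) : (derivative p).Splits := by
  rw [splits_iff_card_roots] at hp ⊢
  have := card_roots_le_derivative p
  have := natDegree_derivative_le p
  exact le_antisymm (card_roots' _) (by omega)

theorem Splits.two_mul_coeff_zero_mul_coeff_two_le {g : ℝ[X]} (hg : g.Splits) {k : ℕ}
    (hdeg : g.natDegree = k + 2) :
    2 * (k + 2) * (g.coeff 0 * g.coeff 2) ≤ (k + 1) * g.coeff 1 ^ 2 := by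
  have hcard := splits_iff_card_roots.1 hg
  have hcoeff (i : ℕ) (hi : i ≤ k + 2) :
      g.coeff i = g.leadingCoeff * (-1) ^ (k + 2 - i) * g.roots.esymm (k + 2 - i) := by
    rw [coeff_eq_esymm_roots_of_card hcard (hdeg ▸ hi), hdeg]
  rw [hcoeff 0 (by omega), hcoeff 1 (by omega), hcoeff 2 (by omega), Nat.sub_zero,
    show k + 2 - 1 = k + 1 by omega, Nat.add_sub_cancel, pow_succ, pow_succ]
  have hsign : ((-1 : ℝ) ^ k) ^ 2 = 1 := by rw [← pow_mul, mul_comm, pow_mul]; norm_num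
  have hnewton := Multiset.esymm_newton_of_card_eq_add_two (hcard.trans hdeg)
  set c := g.leadingCoeff
  calc _ = c ^ 2 * (2 * (k + 2) * (g.roots.esymm (k + 2) * g.roots.esymm k)) := by
        linear_combination (2 * (k + 2) * c ^ 2 * g.roots.esymm (k + 2) * g.roots.esymm k) * hsign
    _ ≤ c ^ 2 * ((k + 1) * g.roots.esymm (k + 1) ^ 2) := by gcongr
    _ = _ := by linear_combination (-(k + 1) * c ^ 2 * g.roots.esymm (k + 1) ^ 2) * hsign

end Polynomial

namespace Multiset

theorem esymm_newton {s : Multiset ℝ} {k d : ℕ} (hs : card s = k + 2 + d) :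
    (k + 2) * (d + 2) * (s.esymm (k + 2) * s.esymm k) ≤
      (k + 1) * (d + 1) * s.esymm (k + 1) ^ 2 := by
  set f := (s.map fun a => X + C a).prod
  have hf : f.Splits := Splits.multisetProd (by simp [Splits.X_add_C])
  set g := derivative^[d] f
  have hg : g.Splits := Function.Iterate.rec Splits hf (fun _ h => h.derivative) d
  have hcoeff (i : ℕ) (hi : i ≤ k + 2) :
      g.coeff i = ((i + d).descFactorial d : ℝ) * s.esymm (k + 2 - i) := by
    rw [coeff_iterate_derivative, nsmul_eq_mul, prod_X_add_C_coeff s (by omega), hs]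
    congr 2
    omega
  have hdeg : g.natDegree = k + 2 := by
    refine le_antisymm ((natDegree_iterate_derivative f d).trans ?_) (le_natDegree_of_ne_zero ?_)
    · rw [natDegree_multiset_prod_of_monic _ (by simpa using fun a _ => monic_X_add_C a)]
      simp [hs]
    · rw [hcoeff _ le_rfl, Nat.sub_self, esymm_zero, mul_one, Nat.cast_ne_zero]
      exact (Nat.descFactorial_pos.2 (by omega)).ne'
  have hcoeffs := hg.two_mul_coeff_zero_mul_coeff_two_le hdeg
  rw [hcoeff 0 (by omega), hcoeff 1 (by omega), hcoeff 2 (by omega), Nat.sub_zero,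
    show k + 2 - 1 = k + 1 by omega, Nat.add_sub_cancel] at hcoeffs
  have h1 : (1 + d).descFactorial d = (d + 1) * d ! := by
    have := Nat.factorial_mul_descFactorial (show d ≤ d + 1 by omega)
    rw [Nat.add_sub_cancel_left, Nat.factorial_one, one_mul, Nat.factorial_succ] at this
    rw [add_comm, this]
  have h2 : 2 * (2 + d).descFactorial d = (d + 2) * ((d + 1) * d !) := by
    have := Nat.factorial_mul_descFactorial (show d ≤ d + 2 by omega)
    rw [Nat.add_sub_cancel_left, Nat.factorial_two, Nat.factorial_succ, Nat.factorial_succ] at this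
    rw [add_comm, this]
  rw [zero_add, Nat.descFactorial_self, h1] at hcoeffs
  have h2' : 2 * ((2 + d).descFactorial d : ℝ) = (d + 2) * ((d + 1) * d !) := by
    exact_mod_cast h2
  refine le_of_mul_le_mul_right ?_ (by positivity : (0 : ℝ) < (d + 1) * (d ! : ℝ) ^ 2)
  push_cast at hcoeffs
  linear_combination hcoeffs - ((k + 2) * (d ! : ℝ) * s.esymm (k + 2) * s.esymm k) * h2'

theorem esymm_maclaurin (s : Multiset ℝ) {k : ℕ} (hpos : ∀ q, 1 ≤ q → q ≤ k → 0 < s.esymm q) :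
    ((k + 1) * card s : ℝ) * s.esymm (k + 1) ≤
      ((card s - k : ℕ) : ℝ) * (s.esymm 1 * s.esymm k) := by
  induction k with
  | zero => simp
  | succ k ih =>
    have ih := ih fun q h1 h2 => hpos q h1 (by omega)
    have hk : 0 < s.esymm k := by
      rcases k.eq_zero_or_pos with rfl | hk
      · simp
      · exact hpos k hk (by omega)
    have h1 := hpos 1 le_rfl (by omega)
    have hk1 := hpos (k + 1) (by omega) le_rfl
    obtain hlt | ⟨d, hd⟩ : card s < k + 2 ∨ ∃ d, card s = k + 2 + d :=
      (lt_or_ge _ _).imp_right fun h => ⟨card s - (k + 2), by omega⟩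
    · rw [esymm_eq_zero_of_card_lt hlt, mul_zero]
      positivity
    have hnewton := esymm_newton hd
    rw [hd, show k + 2 + d - k = d + 2 by omega] at ih
    rw [hd, show k + 2 + d - (k + 1) = d + 1 by omega]
    push_cast at ih hnewton ⊢
    refine le_of_mul_le_mul_right ?_ (by positivity : (0 : ℝ) < (d + 2) * s.esymm k)
    calc _ = (k + 2 + d) * ((k + 2) * (d + 2) * (s.esymm (k + 2) * s.esymm k)) := by ring
      _ ≤ (k + 2 + d) * ((k + 1) * (d + 1) * s.esymm (k + 1) ^ 2) := by gcongr
      _ = (d + 1) * s.esymm (k + 1) * ((k + 1) * (k + 2 + d) * s.esymm (k + 1)) := by ring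
      _ ≤ (d + 1) * s.esymm (k + 1) * ((d + 2) * (s.esymm 1 * s.esymm k)) := by gcongr
      _ = _ := by ring

theorem esymm_pos_of_cons {a : ℝ} {s : Multiset ℝ} {p : ℕ} (hmin : ∀ x ∈ s, a ≤ x)
    (hcone : ∀ q, 1 ≤ q → q ≤ p → 0 < (a ::ₘ s).esymm q) (q : ℕ) (hq : q < p) :
    0 < s.esymm q := by
  induction q with
  | zero => simp
  | succ q ih =>
    have ih := ih (by omega)
    have hcons := esymm_cons a s q ▸ hcone (q + 1) (by omega) hq.le
    rcases le_or_gt a 0 with ha | ha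
    · nlinarith
    · have hcard : q + 2 ≤ card (a ::ₘ s) := by
        by_contra h
        exact (hcone (q + 2) (by omega) hq).ne' (esymm_eq_zero_of_card_lt (by omega))
      exact esymm_pos (fun x hx => ha.trans_le (hmin x hx)) (by simp at hcard; omega)

theorem neg_div_mul_sum_lt_of_cons {a : ℝ} {s : Multiset ℝ} {k : ℕ} (hmin : ∀ x ∈ s, a ≤ x)
    (hcone : ∀ q, 1 ≤ q → q ≤ k + 1 → 0 < (a ::ₘ s).esymm q) :
    -(((card s - k : ℕ) : ℝ) / ((k + 1) * card s)) * s.sum < a := by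
  rcases eq_or_ne s 0 with rfl | hs
  · simpa [esymm_one] using hcone 1 le_rfl (by omega)
  have htail := esymm_pos_of_cons hmin hcone
  have hk := htail k (by omega)
  have hcons := esymm_cons a s k ▸ hcone (k + 1) (by omega) le_rfl
  have hmaclaurin := esymm_maclaurin s (k := k) fun q _ hq => htail q (by omega)
  rw [esymm_one] at hmaclaurin
  have hm : (0 : ℝ) < (k + 1) * card s := by
    have := card_pos.2 hs
    positivity
  rw [neg_mul, div_mul_eq_mul_div, neg_lt, lt_div_iff₀ hm]
  refine lt_of_mul_lt_mul_right ?_ hk.le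
  nlinarith [mul_lt_mul_of_pos_left hcons hm]

theorem neg_div_mul_lt_of_cons {a b : ℝ} {s : Multiset ℝ} {k : ℕ} (hmin : ∀ x ∈ s, a ≤ x)
    (hmax : ∀ x ∈ s, x ≤ b) (hcone : ∀ q, 1 ≤ q → q ≤ k + 1 → 0 < (a ::ₘ s).esymm q) :
    -(((card s - k : ℕ) : ℝ) / (k + 1)) * b < a := by
  refine lt_of_le_of_lt ?_ (neg_div_mul_sum_lt_of_cons hmin hcone)
  rcases (card s).eq_zero_or_pos with hs | hs
  · simp [hs]
  have hsum : s.sum ≤ card s * b := by simpa using sum_le_card_nsmul s b hmax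
  rw [neg_mul, neg_mul, neg_le_neg_iff]
  calc _ ≤ ((card s - k : ℕ) : ℝ) / ((k + 1) * card s) * (card s * b) := by gcongr
    _ = _ := by field_simp

end Multiset

theorem stmt_3 (n p : ℕ) (hp : 2 ≤ p) (hpn : p ≤ n)
    (μ : Fin n → ℝ) (hμ : μ ∈ gardingCone n p) (hmono : Monotone μ) :
    (-(((n - p : ℕ) : ℝ) / ((p : ℝ) * ((n : ℝ) - 1))) *
        ∑ j ∈ Finset.univ.erase (⟨0, by omega⟩ : Fin n), μ j < μ ⟨0, by omega⟩)
    ∧ (-(((n - p : ℕ) : ℝ) / (p : ℝ)) * μ ⟨n - 1, by omega⟩ < μ ⟨0, by omega⟩) := by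
  obtain ⟨k, rfl⟩ : ∃ k, p = k + 1 := ⟨p - 1, by omega⟩
  set i₀ : Fin n := ⟨0, by omega⟩
  set s := (Finset.univ.erase i₀).val.map μ
  have hcons : Finset.univ.val.map μ = μ i₀ ::ₘ s := by
    rw [← Multiset.map_cons, Finset.erase_val, Multiset.cons_erase (Finset.mem_univ _)]
  have hcone (q : ℕ) (hq₁ : 1 ≤ q) (hq₂ : q ≤ k + 1) : 0 < (μ i₀ ::ₘ s).esymm q := by
    rw [← hcons, Finset.esymm_map_val]
    exact hμ q hq₁ hq₂
  have hmin : ∀ x ∈ s, μ i₀ ≤ x := by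
    simpa [s] using fun i _ => hmono (Nat.zero_le i.val)
  have hmax : ∀ x ∈ s, x ≤ μ ⟨n - 1, by omega⟩ := by
    simpa [s] using fun i _ => hmono (Nat.le_sub_one_of_lt i.isLt)
  have hcard : Multiset.card s = n - 1 := by simp [s]
  have hsub : n - (k + 1) = Multiset.card s - k := by omega
  have hcast : ((Multiset.card s : ℕ) : ℝ) = n - 1 := by
    rw [hcard, Nat.cast_sub (by omega), Nat.cast_one]
  have hsum : ∑ j ∈ Finset.univ.erase i₀, μ j = s.sum := rfl
  refine ⟨?_, ?_⟩
  · simpa [hsub, hcast, hsum] using Multiset.neg_div_mul_sum_lt_of_cons hmin hcone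
  · simpa [hsub] using Multiset.neg_div_mul_lt_of_cons hmin hmax hcone
end

section
/- Let p ∈ {2,...,n} and μ ∈ Γ_p with μ_1 ≤ μ_2 ≤ ... ≤ μ_n. Then σ_{p-1}(μ) > μ_{n-p+2} μ_{n-p+3} ··· μ_n (the product of the p-1 largest entries). -/
open Multiset Polynomial

namespace Stmt4

lemma esymm_zero' (s : Multiset ℝ) : s.esymm 0 = 1 := by
  simp [Multiset.esymm, Multiset.powersetCard_zero_left]

lemma esymm_of_card_lt {s : Multiset ℝ} {q : ℕ} (h : Multiset.card s < q) : s.esymm q = 0 := by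
  simp [Multiset.esymm, Multiset.powersetCard_eq_empty q h]

lemma esymm_cons (a : ℝ) (s : Multiset ℝ) (q : ℕ) :
    (a ::ₘ s).esymm (q + 1) = s.esymm (q + 1) + a * s.esymm q := by
  simp only [Multiset.esymm, Multiset.powersetCard_cons, Multiset.map_add, Multiset.sum_add,
    Multiset.map_map, Function.comp_def, Multiset.prod_cons]
  rw [Multiset.sum_map_mul_left]

lemma esymm_one' (s : Multiset ℝ) : s.esymm 1 = s.sum := by
  simp [Multiset.esymm, Multiset.powersetCard_one, Multiset.map_map, Function.comp_def]

lemma esymm_card (s : Multiset ℝ) : s.esymm (Multiset.card s) = s.prod := by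
  induction s using Multiset.induction with
  | empty => simp [esymm_zero']
  | cons a s ih =>
    rw [Multiset.card_cons, esymm_cons, esymm_of_card_lt (by simp), ih, Multiset.prod_cons,
      zero_add]

lemma sq_identity (s : Multiset ℝ) :
    s.esymm 1 ^ 2 = (s.map (fun x => x ^ 2)).sum + 2 * s.esymm 2 := by
  induction s using Multiset.induction with
  | empty =>
    simp [esymm_one', esymm_of_card_lt (show Multiset.card (0 : Multiset ℝ) < 2 by simp)]
  | cons a s ih =>
    have h2 : (a ::ₘ s).esymm 2 = s.esymm 2 + a * s.esymm 1 := esymm_cons a s 1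
    rw [esymm_one'] at ih ⊢
    rw [Multiset.sum_cons, Multiset.map_cons, Multiset.sum_cons, h2, esymm_one']
    linear_combination ih

lemma esymm_inv (s : Multiset ℝ) (h0 : (0 : ℝ) ∉ s) :
    ∀ j ≤ Multiset.card s, (s.map (fun x => x⁻¹)).esymm j * s.prod
      = s.esymm (Multiset.card s - j) := by
  induction s using Multiset.induction with
  | empty =>
    intro j hj
    have : j = 0 := Nat.le_zero.mp hj
    subst this
    simp [esymm_zero']
  | cons a s ih =>
    intro j hj
    have ha : a ≠ 0 := fun h => h0 (h ▸ Multiset.mem_cons_self a s)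
    have h0s : (0 : ℝ) ∉ s := fun h => h0 (Multiset.mem_cons_of_mem h)
    rw [Multiset.card_cons] at hj
    rw [Multiset.map_cons, Multiset.prod_cons, Multiset.card_cons]
    cases j with
    | zero =>
      rw [esymm_zero', one_mul, Nat.sub_zero, ← Multiset.prod_cons, ← Multiset.card_cons a s,
        esymm_card]
    | succ i =>
      rw [esymm_cons]
      rcases Nat.lt_or_ge (Multiset.card s) (i + 1) with hlt | hge
      · -- j = card s + 1, i = card s
        have : i = Multiset.card s := by omega
        subst this
        rw [esymm_of_card_lt (by simpa using hlt)]
        have h' : Multiset.card s + 1 - (Multiset.card s + 1) = 0 := by omega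
        rw [h', esymm_zero']
        have hih := ih h0s (Multiset.card s) le_rfl
        rw [Nat.sub_self, esymm_zero'] at hih
        rw [zero_add]
        calc a⁻¹ * (Multiset.map (fun x => x⁻¹) s).esymm (Multiset.card s) * (a * s.prod)
            = (Multiset.map (fun x => x⁻¹) s).esymm (Multiset.card s) * s.prod
              * (a⁻¹ * a) := by ring
          _ = 1 := by rw [hih, inv_mul_cancel₀ ha, one_mul]
      · have e1 := ih h0s (i + 1) hge
        have e2 := ih h0s i (by omega)
        have harith1 : Multiset.card s + 1 - (i + 1) = Multiset.card s - i := by omega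
        have harith2 : Multiset.card s - i = (Multiset.card s - (i + 1)) + 1 := by omega
        rw [harith1, harith2, esymm_cons]
        calc ((Multiset.map (fun x => x⁻¹) s).esymm (i + 1)
              + a⁻¹ * (Multiset.map (fun x => x⁻¹) s).esymm i) * (a * s.prod)
            = a * ((Multiset.map (fun x => x⁻¹) s).esymm (i + 1) * s.prod)
              + (a⁻¹ * a) * ((Multiset.map (fun x => x⁻¹) s).esymm i * s.prod) := by ring
          _ = a * s.esymm (Multiset.card s - (i + 1)) + 1 * s.esymm (Multiset.card s - i) := by
              rw [e1, e2, inv_mul_cancel₀ ha]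
          _ = s.esymm (Multiset.card s - (i + 1) + 1)
              + a * s.esymm (Multiset.card s - (i + 1)) := by
              rw [one_mul, harith2]; ring

lemma deriv_step (s : Multiset ℝ) (hs : s ≠ 0) :
    ∃ t : Multiset ℝ, Multiset.card t = Multiset.card s - 1 ∧
      ∀ j ≤ Multiset.card s - 1,
        (Multiset.card s : ℝ) * t.esymm j = ((Multiset.card s - j : ℕ) : ℝ) * s.esymm j := by
  set m := Multiset.card s with hm
  have hm1 : 1 ≤ m := by
    rwa [hm, Nat.one_le_iff_ne_zero, ne_eq, Multiset.card_eq_zero]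
  set f : Polynomial ℝ := (s.map fun a => X - C a).prod with hf
  have hmonic : f.Monic := monic_multiset_prod_of_monic _ _ fun a _ => monic_X_sub_C a
  have hdeg : f.natDegree = m := natDegree_multiset_prod_X_sub_C_eq_card s
  have hroots : f.roots = s := roots_multiset_prod_X_sub_C s
  -- derivative
  have hcoeffd : ∀ k, (derivative f).coeff k = f.coeff (k + 1) * (k + 1) :=
    fun k => coeff_derivative f k
  have hlead : (derivative f).coeff (m - 1) = m := by
    rw [hcoeffd, Nat.sub_add_cancel hm1]
    have : f.coeff m = 1 := by
      rw [← hdeg]; exact hmonic.coeff_natDegree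
    rw [this, one_mul]
    norm_cast
    omega
  have hdegd : (derivative f).natDegree = m - 1 := by
    have hle : (derivative f).natDegree < m := by
      rw [← hdeg]
      exact natDegree_derivative_lt (by rw [hdeg]; omega)
    have hge : m - 1 ≤ (derivative f).natDegree := by
      by_contra hc
      push_neg at hc
      have := coeff_eq_zero_of_natDegree_lt hc
      rw [hlead] at this
      norm_cast at this
      omega
    omega
  have hleadco : (derivative f).leadingCoeff = (m : ℝ) := by
    rw [leadingCoeff, hdegd, hlead]
  have hd0 : derivative f ≠ 0 := fun h => by
    rw [h, coeff_zero] at hlead; norm_cast at hlead; omega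
  have hcard : Multiset.card (derivative f).roots = (derivative f).natDegree := by
    have h1 : Multiset.card (derivative f).roots ≤ m - 1 := by
      rw [← hdegd]; exact (derivative f).card_roots'
    have h2 : m ≤ Multiset.card (derivative f).roots + 1 := by
      have := card_roots_le_derivative f
      rwa [hroots, ← hm] at this
    omega
  refine ⟨(derivative f).roots, by rw [hcard, hdegd], ?_⟩
  intro j hj
  have hcoeff_eq := coeff_eq_esymm_roots_of_card hcard
    (show m - 1 - j ≤ (derivative f).natDegree by rw [hdegd]; omega)
  rw [hdegd, hleadco] at hcoeff_eq
  have harith : m - 1 - (m - 1 - j) = j := by omega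
  rw [harith] at hcoeff_eq
  -- coeff of f: f.coeff (m - j) = (-1)^j * esymm j s
  have hfcoeff : f.coeff (m - j) = (-1 : ℝ) ^ j * s.esymm j := by
    have := Multiset.prod_X_sub_C_coeff s (show m - j ≤ Multiset.card s by rw [← hm]; omega)
    rw [← hm] at this
    have harith2 : m - (m - j) = j := by omega
    rw [harith2] at this
    exact this
  have h1 := hcoeffd (m - 1 - j)
  have harith3 : m - 1 - j + 1 = m - j := by omega
  rw [harith3, hfcoeff, hcoeff_eq] at h1
  have hcast : ((m - 1 - j : ℕ) : ℝ) + 1 = ((m - j : ℕ) : ℝ) := by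
    have h : m - 1 - j + 1 = m - j := by omega
    exact_mod_cast congrArg (fun k : ℕ => (k : ℝ)) h
  rw [hcast] at h1
  have hpow : ((-1 : ℝ) ^ j) ≠ 0 := by positivity
  have key : (-1 : ℝ) ^ j * ((m : ℝ) * (derivative f).roots.esymm j)
      = (-1 : ℝ) ^ j * (((m - j : ℕ) : ℝ) * s.esymm j) := by
    linear_combination h1
  exact mul_left_cancel₀ hpow key

lemma reduce (s : Multiset ℝ) : ∀ r ≤ Multiset.card s,
    ∃ t : Multiset ℝ, Multiset.card t = Multiset.card s - r ∧
      ∀ j ≤ Multiset.card s - r, ∃ c : ℝ, 0 < c ∧ t.esymm j = c * s.esymm j := by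
  intro r
  induction r with
  | zero =>
    intro _
    exact ⟨s, by simp, fun j _ => ⟨1, one_pos, (one_mul _).symm⟩⟩
  | succ r ih =>
    intro hr
    obtain ⟨t, hcard, hc⟩ := ih (by omega)
    have htne : t ≠ 0 := by
      intro h
      rw [h, Multiset.card_zero] at hcard
      omega
    obtain ⟨u, hucard, hu⟩ := deriv_step t htne
    refine ⟨u, by omega, ?_⟩
    intro j hj
    obtain ⟨c, hcpos, hce⟩ := hc j (by omega)
    have h1 := hu j (by omega)
    have hmpos : (0 : ℕ) < Multiset.card t := by omega
    have hmjpos : (0 : ℕ) < Multiset.card t - j := by omega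
    refine ⟨((Multiset.card t - j : ℕ) : ℝ) / (Multiset.card t : ℝ) * c, ?_, ?_⟩
    · positivity
    · have hm0 : ((Multiset.card t : ℕ) : ℝ) ≠ 0 := by positivity
      field_simp
      rw [mul_comm (u.esymm j), h1, hce]
      ring

lemma sign_lemma (s : Multiset ℝ) (k : ℕ) (hk : 1 ≤ k) (hks : k + 1 ≤ Multiset.card s)
    (h1 : 0 < s.esymm (k - 1)) (h2 : s.esymm k = 0) : s.esymm (k + 1) ≤ 0 := by
  by_contra hc
  push_neg at hc
  obtain ⟨t, hcard, hprop⟩ := reduce s (Multiset.card s - (k + 1)) (by omega)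
  have hcard' : Multiset.card t = k + 1 := by omega
  have hck : Multiset.card s - (Multiset.card s - (k + 1)) = k + 1 := by omega
  rw [hck] at hprop
  obtain ⟨c1, hc1, he1⟩ := hprop (k - 1) (by omega)
  obtain ⟨c2, hc2, he2⟩ := hprop k (by omega)
  obtain ⟨c3, hc3, he3⟩ := hprop (k + 1) le_rfl
  have ht1 : 0 < t.esymm (k - 1) := by rw [he1]; positivity
  have ht2 : t.esymm k = 0 := by rw [he2, h2, mul_zero]
  have ht3 : 0 < t.esymm (k + 1) := by rw [he3]; positivity
  have hprod : t.prod = t.esymm (k + 1) := by rw [← hcard', esymm_card]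
  have hprodpos : 0 < t.prod := hprod ▸ ht3
  have h0t : (0 : ℝ) ∉ t := by
    intro h
    rw [Multiset.prod_eq_zero h] at hprodpos
    exact lt_irrefl _ hprodpos
  set u := t.map (fun x => x⁻¹) with hu
  have hinv1 := esymm_inv t h0t 1 (by omega)
  have hinv2 := esymm_inv t h0t 2 (by omega)
  rw [hcard'] at hinv1 hinv2
  have harith1 : k + 1 - 1 = k := rfl
  have harith2 : k + 1 - 2 = k - 1 := by omega
  rw [harith1, ht2] at hinv1
  rw [harith2] at hinv2
  rw [← hu] at hinv1 hinv2
  -- u.esymm 1 = 0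
  have hu1 : u.esymm 1 = 0 := by
    rcases mul_eq_zero.mp hinv1 with h | h
    · exact h
    · exact absurd h (ne_of_gt hprodpos)
  have hu2 : 0 < u.esymm 2 := by
    nlinarith [hinv2, ht1, hprodpos]
  have hsq := sq_identity u
  rw [hu1] at hsq
  have hsum : 0 ≤ (u.map (fun x => x ^ 2)).sum := by
    apply Multiset.sum_nonneg
    intro x hx
    obtain ⟨y, _, rfl⟩ := Multiset.mem_map.mp hx
    positivity
  nlinarith

lemma esymm_map_add (s : Multiset ℝ) (t : ℝ) (q : ℕ) (hq : q ≤ Multiset.card s) :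
    (s.map (fun x => x + t)).esymm q =
      ∑ i ∈ Finset.range (q + 1),
        ((Multiset.card s - q + i).choose (Multiset.card s - q) : ℝ)
          * s.esymm (q - i) * t ^ i := by
  set n := Multiset.card s with hn
  set f : Polynomial ℝ := (s.map fun a => X + C a).prod with hf
  have hdegf : f.natDegree ≤ n := by
    refine le_trans (natDegree_multiset_prod_le _) ?_
    rw [Multiset.map_map]
    refine le_trans (Multiset.sum_map_le_sum_map _ (fun _ => 1)
      (fun a _ => le_of_eq (natDegree_X_add_C a))) ?_
    simp [hn]
  -- taylor t f is the product over shifted multiset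
  have htaylor : ((s.map (fun x => x + t)).map fun a => X + C a).prod = taylor t f := by
    rw [hf, ← Polynomial.taylorAlgHom_apply, map_multiset_prod, Multiset.map_map,
      Multiset.map_map]
    congr 1
    apply Multiset.map_congr rfl
    intro a _
    simp only [Function.comp_apply, taylorAlgHom_apply]
    simp only [_root_.map_add, taylor_X, taylor_C, C_add]
    ring
  have hcardmap : Multiset.card (s.map (fun x => x + t)) = n := by simp [hn]
  have hcoeff : (s.map (fun x => x + t)).esymm q = (taylor t f).coeff (n - q) := by
    have := Multiset.prod_X_add_C_coeff (s.map (fun x => x + t))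
      (show n - q ≤ Multiset.card (s.map (fun x => x + t)) by rw [hcardmap]; omega)
    rw [hcardmap] at this
    have harith : n - (n - q) = q := by omega
    rw [harith] at this
    rw [← this, htaylor]
  rw [hcoeff, taylor_coeff]
  have hdeghd : (hasseDeriv (n - q) f).natDegree < q + 1 := by
    have := natDegree_hasseDeriv f (n - q)
    omega
  rw [eval_eq_sum_range' hdeghd]
  apply Finset.sum_congr rfl
  intro i hi
  rw [Finset.mem_range] at hi
  rw [hasseDeriv_coeff]
  have hadd : i + (n - q) = n - q + i := Nat.add_comm _ _
  have hco : f.coeff (i + (n - q)) = s.esymm (q - i) := by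
    have hle : i + (n - q) ≤ Multiset.card s := by omega
    have hthis := Multiset.prod_X_add_C_coeff s hle
    rw [← hf, ← hn] at hthis
    rw [hthis]
    congr 1
    omega
  rw [hco, hadd]

lemma esymm_map_add_pos (s : Multiset ℝ) (t : ℝ) (ht : 0 ≤ t) (q : ℕ)
    (hq : q ≤ Multiset.card s) (hpos : ∀ j, 1 ≤ j → j ≤ q → 0 < s.esymm j) :
    0 < (s.map (fun x => x + t)).esymm q := by
  rw [esymm_map_add s t q hq]
  rw [Finset.sum_range_succ']
  have h0 : (0 : ℝ) <
      ((Multiset.card s - q + 0).choose (Multiset.card s - q) : ℝ) * s.esymm (q - 0) * t ^ 0 := by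
    simp only [Nat.add_zero, Nat.choose_self, Nat.cast_one, one_mul, Nat.sub_zero, pow_zero,
      mul_one]
    rcases Nat.eq_zero_or_pos q with rfl | hqpos
    · rw [esymm_zero']; norm_num
    · exact hpos q hqpos le_rfl
  have hrest : 0 ≤ ∑ i ∈ Finset.range q,
      ((Multiset.card s - q + (i + 1)).choose (Multiset.card s - q) : ℝ)
        * s.esymm (q - (i + 1)) * t ^ (i + 1) := by
    apply Finset.sum_nonneg
    intro i hi
    have he : 0 ≤ s.esymm (q - (i + 1)) := by
      rcases Nat.eq_zero_or_pos (q - (i + 1)) with h | h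
      · rw [h, esymm_zero']; norm_num
      · exact le_of_lt (hpos _ h (by omega))
    positivity
  linarith

lemma garding : ∀ p : ℕ, ∀ s : Multiset ℝ,
    (∀ q, 1 ≤ q → q ≤ p → 0 < s.esymm q) → p ≤ Multiset.card s →
    ∀ a ∈ s, ∀ q, 1 ≤ q → q ≤ p - 1 → 0 < (s.erase a).esymm q := by
  intro p
  induction p with
  | zero => intro s _ _ a _ q hq1 hq2; omega
  | succ p ih =>
    intro s hΓ hcard a ha q hq1 hq2
    have hp1 : 1 ≤ p := by omega
    rcases Nat.lt_or_ge q p with hlt | hge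
    · exact ih s (fun r hr1 hr2 => hΓ r hr1 (by omega)) (by omega) a ha q hq1 (by omega)
    have hqp : q = p := by omega
    subst hqp
    -- main case : show 0 < (s.erase a).esymm q
    set s' := s.erase a with hs'
    have hcards' : Multiset.card s' = Multiset.card s - 1 := Multiset.card_erase_of_mem ha
    set n' := Multiset.card s' with hn'
    have hpn' : q ≤ n' := by omega
    set c : ℕ → ℝ := fun i => ((n' - q + i).choose (n' - q) : ℝ) * s'.esymm (q - i) with hc
    set G : ℝ → ℝ := fun t => ∑ i ∈ Finset.range (q + 1), c i * t ^ i with hG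
    have hFG : ∀ t : ℝ, (s'.map (fun x => x + t)).esymm q = G t := by
      intro t
      rw [esymm_map_add s' t q hpn', hG]
    by_contra hcon
    push_neg at hcon
    have hG0 : G 0 ≤ 0 := by
      have := hFG 0
      have hid : s'.map (fun x => x + (0 : ℝ)) = s' := by
        rw [show (fun x : ℝ => x + (0 : ℝ)) = id by funext x; simp, Multiset.map_id]
      rw [hid] at this
      linarith [this]
    -- coefficients
    have hcp : c q = (n'.choose (n' - q) : ℝ) := by
      rw [hc]
      simp only [Nat.sub_self, esymm_zero', Nat.sub_add_cancel hpn', mul_one]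
    have hcppos : (0 : ℝ) < c q := by
      rw [hcp]
      have : 0 < n'.choose (n' - q) := Nat.choose_pos (by omega)
      exact_mod_cast this
    set B : ℝ := ∑ i ∈ Finset.range q, |c i| with hB
    have hBnn : 0 ≤ B := Finset.sum_nonneg fun i _ => abs_nonneg _
    set T : ℝ := max 1 ((B + 1) / c q) with hT
    have hT1 : 1 ≤ T := le_max_left _ _
    have hGT : 0 < G T := by
      have hsplit : G T = (∑ i ∈ Finset.range q, c i * T ^ i) + c q * T ^ q :=
        Finset.sum_range_succ _ q
      have hbound : ∀ i ∈ Finset.range q, c i * T ^ i ≥ -(|c i| * T ^ (q - 1)) := by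
        intro i hi
        rw [Finset.mem_range] at hi
        have hTpow : T ^ i ≤ T ^ (q - 1) := pow_le_pow_right₀ hT1 (by omega)
        have h1 : c i * T ^ i ≥ -(|c i| * T ^ i) := by
          have := neg_abs_le (c i)
          have hTnn : (0 : ℝ) ≤ T ^ i := by positivity
          nlinarith
        have h2 : |c i| * T ^ i ≤ |c i| * T ^ (q - 1) := by
          apply mul_le_mul_of_nonneg_left hTpow (abs_nonneg _)
        linarith
      have hsum : (∑ i ∈ Finset.range q, c i * T ^ i) ≥ -(B * T ^ (q - 1)) := by
        rw [hB, Finset.sum_mul, ← Finset.sum_neg_distrib]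
        exact Finset.sum_le_sum hbound
      have hTc : c q * T ≥ B + 1 := by
        have : (B + 1) / c q ≤ T := le_max_right _ _
        calc B + 1 = c q * ((B + 1) / c q) := by field_simp
          _ ≤ c q * T := by apply mul_le_mul_of_nonneg_left this (le_of_lt hcppos)
      have hTppow : T ^ q = T ^ (q - 1) * T := by
        rw [← pow_succ]
        congr 1
        omega
      have hTpnn : (0 : ℝ) < T ^ (q - 1) := by positivity
      calc (0 : ℝ) < T ^ (q - 1) * (c q * T - B) := by nlinarith
        _ = c q * T ^ q - B * T ^ (q - 1) := by rw [hTppow]; ring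
        _ ≤ G T := by rw [hsplit]; linarith
    -- IVT
    have hcont : ContinuousOn G (Set.Icc 0 T) := by
      apply Continuous.continuousOn
      apply continuous_finset_sum
      intro i _
      exact (continuous_const.mul (continuous_pow i))
    have h0mem : (0 : ℝ) ∈ Set.Icc (G 0) (G T) := ⟨hG0, le_of_lt hGT⟩
    obtain ⟨t0, ht0mem, hGt0⟩ := intermediate_value_Icc (by linarith : (0:ℝ) ≤ T) hcont h0mem
    have ht0 : 0 ≤ t0 := ht0mem.1
    -- the shifted multiset
    set ν := s.map (fun x => x + t0) with hν
    have hcardν : Multiset.card ν = Multiset.card s := by simp [hν]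
    have hνΓ : ∀ r, 1 ≤ r → r ≤ q + 1 → 0 < ν.esymm r := by
      intro r hr1 hr2
      exact esymm_map_add_pos s t0 ht0 r (by omega) (fun j hj1 hj2 => hΓ j hj1 (by omega))
    have hbν : a + t0 ∈ ν := Multiset.mem_map_of_mem _ ha
    have herase : ν.erase (a + t0) = s'.map (fun x => x + t0) := by
      rw [hν, hs', ← Multiset.map_erase _ (add_left_injective t0) a s]
    have hep : (ν.erase (a + t0)).esymm q = 0 := by
      rw [herase, hFG t0, hGt0]
    have hcardeν : Multiset.card (ν.erase (a + t0)) = n' := by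
      rw [Multiset.card_erase_of_mem hbν, hcardν, hcards']
      exact Nat.pred_eq_sub_one
    have hep1 : 0 < (ν.erase (a + t0)).esymm (q + 1) := by
      have hconseq : (a + t0) ::ₘ ν.erase (a + t0) = ν := Multiset.cons_erase hbν
      have := esymm_cons (a + t0) (ν.erase (a + t0)) q
      rw [hconseq, hep, mul_zero, add_zero] at this
      rw [← this]
      exact hνΓ (q + 1) (by omega) le_rfl
    have hepm1 : 0 < (ν.erase (a + t0)).esymm (q - 1) := by
      rcases Nat.eq_or_lt_of_le hp1 with h1 | h2
      · have hq0 : q - 1 = 0 := by omega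
        rw [hq0, esymm_zero']
        norm_num
      · exact ih ν (fun r hr1 hr2 => hνΓ r hr1 (by omega)) (by omega) (a + t0) hbν (q - 1)
          (by omega) (by omega)
    rcases Nat.eq_or_lt_of_le hpn' with heq | hlt
    · -- n' = q : esymm (q+1) of a multiset of card q is zero
      have : (ν.erase (a + t0)).esymm (q + 1) = 0 :=
        esymm_of_card_lt (by rw [hcardeν]; omega)
      linarith
    · have := sign_lemma (ν.erase (a + t0)) q hp1 (by omega) hepm1 hep
      linarith

lemma esymm_bridge (n p : ℕ) (μ : Fin n → ℝ) :
    esymm n p μ = (Finset.univ.val.map μ).esymm p :=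
  (Finset.esymm_map_val μ Finset.univ p).symm

lemma ms_card (n : ℕ) (μ : Fin n → ℝ) :
    Multiset.card (Finset.univ.val.map μ) = n := by simp

lemma ms_succ (m : ℕ) (μ : Fin (m + 1) → ℝ) :
    (Finset.univ.val.map μ)
      = μ (Fin.last m) ::ₘ (Finset.univ.val.map (fun i : Fin m => μ i.castSucc)) := by
  rw [Fin.univ_val_map, Fin.univ_val_map, List.ofFn_succ']
  simp only [List.concat_eq_append]
  rw [← Multiset.coe_add]
  rw [show ((List.ofFn fun i : Fin m => μ i.castSucc : List ℝ) : Multiset ℝ)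
      + (([μ (Fin.last m)] : List ℝ) : Multiset ℝ)
    = (([μ (Fin.last m)] : List ℝ) : Multiset ℝ)
      + ((List.ofFn fun i : Fin m => μ i.castSucc : List ℝ) : Multiset ℝ) from add_comm _ _]
  rfl

lemma main : ∀ p : ℕ, 2 ≤ p → ∀ n : ℕ, p ≤ n → ∀ μ : Fin n → ℝ, Monotone μ →
    (∀ q, 1 ≤ q → q ≤ p → 0 < (Finset.univ.val.map μ).esymm q) →
    (∏ j ∈ Finset.univ.filter (fun j : Fin n => n - p + 1 ≤ (j : ℕ)), μ j)
      < (Finset.univ.val.map μ).esymm (p - 1) := by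
  intro p
  induction p with
  | zero => omega
  | succ p ih =>
    intro hp2 n hpn μ hmono hΓ
    -- n = m + 1
    obtain ⟨m, rfl⟩ : ∃ m, n = m + 1 := ⟨n - 1, by omega⟩
    set s : Multiset ℝ := Finset.univ.val.map μ with hs
    set μ' : Fin m → ℝ := fun i => μ i.castSucc with hμ'
    set s' : Multiset ℝ := Finset.univ.val.map μ' with hs'
    have hdecomp : s = μ (Fin.last m) ::ₘ s' := ms_succ m μ
    have hserase : s.erase (μ (Fin.last m)) = s' := by
      rw [hdecomp, Multiset.erase_cons_head]
    have hmemlast : μ (Fin.last m) ∈ s := by rw [hdecomp]; exact Multiset.mem_cons_self _ _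
    have hcards : Multiset.card s = m + 1 := ms_card _ _
    -- positivity of last entry
    have hsum : s.sum = ∑ i : Fin (m + 1), μ i := by
      rw [hs, Finset.sum]
    have hlastpos : 0 < μ (Fin.last m) := by
      have h1 : 0 < s.esymm 1 := hΓ 1 le_rfl (by omega)
      rw [esymm_one', hsum] at h1
      by_contra hc
      push_neg at hc
      have : ∑ i : Fin (m + 1), μ i ≤ ∑ _i : Fin (m + 1), (0 : ℝ) := by
        apply Finset.sum_le_sum
        intro i _
        exact le_trans (hmono (Fin.le_last i)) hc
      simp at this
      linarith
    -- positivity of erased esymms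
    have herasepos : ∀ q, 1 ≤ q → q ≤ p → 0 < s'.esymm q := by
      intro q h1 h2
      rw [← hserase]
      exact garding (p + 1) s hΓ (by omega) _ hmemlast q h1 (by omega)
    -- split the product
    have hfiltereq : ∀ j : Fin m,
        (m + 1 - (p + 1) + 1 ≤ ((j.castSucc : Fin (m + 1)) : ℕ)) ↔ (m - p + 1 ≤ (j : ℕ)) := by
      intro j
      simp only [Fin.coe_castSucc]
      omega
    have hprodsplit :
        (∏ j ∈ Finset.univ.filter (fun j : Fin (m + 1) => m + 1 - (p + 1) + 1 ≤ (j : ℕ)), μ j)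
        = μ (Fin.last m)
          * ∏ j ∈ Finset.univ.filter (fun j : Fin m => m - p + 1 ≤ (j : ℕ)), μ' j := by
      rw [Finset.prod_filter, Finset.prod_filter, Fin.prod_univ_castSucc]
      have hlast : (if m + 1 - (p + 1) + 1 ≤ ((Fin.last m : Fin (m + 1)) : ℕ)
          then μ (Fin.last m) else 1) = μ (Fin.last m) := by
        rw [if_pos]
        simp only [Fin.val_last]
        omega
      rw [hlast, mul_comm]
      congr 1
      apply Finset.prod_congr rfl
      intro j _
      rw [hμ']
      congr 1
      · exact propext (hfiltereq j)
    rcases Nat.lt_or_ge p 2 with hplt | hpge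
    · -- base case p = 1, p + 1 = 2
      have hp1 : p = 1 := by omega
      subst hp1
      -- goal : product over {j : 2 ≤ j+... } < esymm 1
      rw [hprodsplit]
      have hfilterempty :
          Finset.univ.filter (fun j : Fin m => m - 1 + 1 ≤ (j : ℕ)) = ∅ := by
        apply Finset.filter_false_of_mem
        intro j _
        omega
      rw [hfilterempty, Finset.prod_empty, mul_one]
      have h1 : s.esymm (1 + 1 - 1) = s'.esymm 1 + μ (Fin.last m) := by
        rw [hdecomp]
        have := esymm_cons (μ (Fin.last m)) s' 0
        rw [esymm_zero', mul_one] at this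
        exact this
      rw [h1]
      have := herasepos 1 le_rfl le_rfl
      linarith
    · -- inductive case
      have ihp := ih hpge (m) (by omega) μ' (fun i j hij => hmono (Fin.castSucc_le_castSucc_iff.mpr hij)) herasepos
      have hesymm : s.esymm (p + 1 - 1) = s'.esymm p + μ (Fin.last m) * s'.esymm (p - 1) := by
        rw [hdecomp]
        have : p + 1 - 1 = (p - 1) + 1 := by omega
        rw [this]
        have := esymm_cons (μ (Fin.last m)) s' (p - 1)
        rw [this]
        congr 2
        omega
      rw [hesymm, hprodsplit]
      have hsppos : 0 < s'.esymm p := herasepos p (by omega) le_rfl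
      have hlt : μ (Fin.last m)
          * ∏ j ∈ Finset.univ.filter (fun j : Fin m => m - p + 1 ≤ (j : ℕ)), μ' j
          < μ (Fin.last m) * s'.esymm (p - 1) := by
        apply mul_lt_mul_of_pos_left _ hlastpos
        exact ihp
      linarith

end Stmt4

theorem stmt_4 (n p : ℕ) (hp : 2 ≤ p) (hpn : p ≤ n)
    (μ : Fin n → ℝ) (hμ : μ ∈ gardingCone n p) (hmono : Monotone μ) :
    (∏ j ∈ Finset.univ.filter (fun j : Fin n => n - p + 1 ≤ (j : ℕ)), μ j)
      < esymm n (p - 1) μ := by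
  rw [Stmt4.esymm_bridge]
  exact Stmt4.main p hp n hpn μ hmono
    (fun q h1 h2 => by rw [← Stmt4.esymm_bridge]; exact hμ q h1 h2)
end

section
/- Let Γ ⊊ ℝ^n be a symmetric, open, convex cone with vertex at the origin containing the positive orthant Γ_n. Then the closure of Γ satisfies Γ̄ + Γ ⊆ Γ. Moreover, if f is a symmetric concave C¹ function on Γ satisfying limsup_{s→+∞} f(sμ) = sup_Γ f for all μ ∈ Γ, then for all μ, ν ∈ Γ, limsup_{s→+∞} f(ν + sμ) = sup_Γ f. -/
open Filter Topology

theorem stmt_7 (n : ℕ) (hn : 1 ≤ n) (Γ : Set (Fin n → ℝ))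
    (hproper : Γ ≠ Set.univ)
    (hsymmSet : ∀ σ : Equiv.Perm (Fin n), ∀ μ ∈ Γ, (μ ∘ σ) ∈ Γ)
    (hopen : IsOpen Γ) (hconv : Convex ℝ Γ)
    (hcone : ∀ t : ℝ, 0 < t → ∀ μ ∈ Γ, t • μ ∈ Γ)
    (horthant : {μ : Fin n → ℝ | ∀ i, 0 < μ i} ⊆ Γ)
    (f : (Fin n → ℝ) → ℝ)
    (hfsymm : ∀ σ : Equiv.Perm (Fin n), ∀ μ ∈ Γ, f (μ ∘ σ) = f μ)
    (hfconc : ConcaveOn ℝ Γ f) (hfC1 : ContDiffOn ℝ 1 f Γ)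
    (hflim : ∀ μ ∈ Γ,
      Filter.limsup (fun s : ℝ => ((f (s • μ) : EReal))) Filter.atTop
        = ⨆ ν ∈ Γ, (f ν : EReal)) :
    (∀ x ∈ closure Γ, ∀ y ∈ Γ, x + y ∈ Γ) ∧
    (∀ μ ∈ Γ, ∀ ν ∈ Γ,
      Filter.limsup (fun s : ℝ => ((f (ν + s • μ) : EReal))) Filter.atTop
        = ⨆ ρ ∈ Γ, (f ρ : EReal)) := by
  -- Γ + Γ ⊆ Γ
  have hΓΓ : ∀ x ∈ Γ, ∀ y ∈ Γ, x + y ∈ Γ := by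
    intro x hx y hy
    have h2 : (2:ℝ) • ((1/2 : ℝ) • x + (1/2:ℝ) • y) ∈ Γ := by
      apply hcone 2 (by norm_num)
      exact hconv hx hy (by norm_num) (by norm_num) (by norm_num)
    convert h2 using 1
    module
  -- closure Γ + Γ ⊆ Γ
  have hA : ∀ x ∈ closure Γ, ∀ y ∈ Γ, x + y ∈ Γ := by
    intro x hx y hy
    obtain ⟨ε, hε, hball⟩ := Metric.isOpen_iff.mp hopen y hy
    obtain ⟨x', hx', hdist⟩ := Metric.mem_closure_iff.mp hx ε hε
    have hz : y + (x - x') ∈ Γ := by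
      apply hball
      rw [Metric.mem_ball, dist_eq_norm]
      have : y + (x - x') - y = x - x' := by abel
      rw [this, ← dist_eq_norm]
      exact hdist
    have h := hΓΓ x' hx' _ hz
    have : x' + (y + (x - x')) = x + y := by abel
    rwa [this] at h
  refine ⟨hA, ?_⟩
  -- monotonicity: f (x + v) ≥ f x for x, v ∈ Γ
  have hmono : ∀ x ∈ Γ, ∀ v ∈ Γ, f x ≤ f (x + v) := by
    intro x hx v hv
    by_contra hcon
    push_neg at hcon
    set δ : ℝ := f (x + v) - f x with hδdef
    have hδ : δ < 0 := by simp [hδdef]; linarith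
    -- membership of x + t • v
    have hmem : ∀ t : ℝ, 0 < t → x + t • v ∈ Γ :=
      fun t ht => hA x (subset_closure hx) (t • v) (hcone t ht v hv)
    -- Step 1 : linear decay
    have hstep1 : ∀ t : ℝ, 1 ≤ t → f (x + t • v) ≤ f x + t * δ := by
      intro t ht
      have ht0 : 0 < t := by linarith
      have hb : (0:ℝ) < 1/t := by positivity
      have ha : (0:ℝ) ≤ 1 - 1/t := by
        have : 1/t ≤ 1 := by rw [div_le_one ht0]; linarith
        linarith
      have hsum : (1 - 1/t) + 1/t = 1 := by ring
      have hc := hfconc.2 hx (hmem t ht0) ha (le_of_lt hb) hsum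
      have hpt : (1 - 1/t) • x + (1/t) • (x + t • v) = x + v := by
        have h1 : (1/t) * t = 1 := by field_simp
        match_scalars <;> field_simp <;> ring
      rw [hpt] at hc
      simp only [smul_eq_mul] at hc
      have this' := mul_le_mul_of_nonneg_left hc (le_of_lt ht0)
      rw [mul_add] at this'
      have hkey : t * ((1/t) * f (x + t • v)) = f (x + t • v) := by field_simp
      have hkey2 : t * ((1 - 1/t) * f x) = t * f x - f x := by field_simp
      rw [hkey, hkey2] at this'
      have hδeq : t * δ = t * f (x + v) - t * f x := by rw [hδdef]; ring
      linarith
    -- Step 2 : lower bound via midpoint with ray through origin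
    have hstep2 : ∀ t : ℝ, 0 < t →
        (1/2) * f ((2:ℝ) • x) + (1/2) * f ((2*t) • v) ≤ f (x + t • v) := by
      intro t ht
      have h2x : (2:ℝ) • x ∈ Γ := hcone 2 (by norm_num) x hx
      have h2tv : (2*t) • v ∈ Γ := hcone (2*t) (by linarith) v hv
      have hc := hfconc.2 h2x h2tv (by norm_num : (0:ℝ) ≤ 1/2)
        (by norm_num : (0:ℝ) ≤ 1/2) (by norm_num : (1/2 : ℝ) + 1/2 = 1)
      have hpt : (1/2 : ℝ) • ((2:ℝ) • x) + (1/2 : ℝ) • ((2*t) • v) = x + t • v := by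
        match_scalars <;> ring
      rwa [hpt] at hc
    -- frequently f (s • v) > f v - 1
    have hfreq : ∃ᶠ s : ℝ in atTop, ((f v - 1 : ℝ) : EReal) < ((f (s • v) : ℝ) : EReal) := by
      refine Filter.frequently_lt_of_lt_limsup (by isBoundedDefault) ?_
      rw [hflim v hv]
      calc ((f v - 1 : ℝ) : EReal) < ((f v : ℝ) : EReal) := by
            exact_mod_cast sub_one_lt _
        _ ≤ ⨆ ν ∈ Γ, ((f ν : ℝ) : EReal) := le_biSup (fun ρ : Fin n → ℝ => ((f ρ : ℝ) : EReal)) hv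
    set C : ℝ := (1/2) * f ((2:ℝ) • x) + (1/2) * (f v - 1) with hCdef
    -- choose threshold
    set T : ℝ := max 1 ((C - f x)/δ + 1) with hTdef
    obtain ⟨s, hs, hfs⟩ := (Filter.frequently_atTop.mp hfreq) (2 * T)
    have hfs' : f v - 1 < f (s • v) := by exact_mod_cast hfs
    have hT1 : (1:ℝ) ≤ T := le_max_left _ _
    have hT2 : (C - f x)/δ + 1 ≤ T := le_max_right _ _
    have ht : 1 ≤ s / 2 := by linarith
    have hts : 2 * (s/2) = s := by ring
    have h1 := hstep1 (s/2) ht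
    have h2 := hstep2 (s/2) (by linarith)
    rw [hts] at h2
    -- f x + (s/2) * δ < C
    have hlt : f x + (s/2) * δ < C := by
      have hgt : (C - f x)/δ < s/2 := by linarith
      have := (div_lt_iff_of_neg hδ).mp hgt
      linarith
    have hC : C ≤ (1/2) * f ((2:ℝ) • x) + (1/2) * f (s • v) := by
      rw [hCdef]; linarith
    linarith
  -- assemble part 2
  intro μ hμ ν hν
  apply le_antisymm
  · apply Filter.limsup_le_of_le
    · isBoundedDefault
    · filter_upwards [Filter.eventually_gt_atTop (0:ℝ)] with s hs
      have hmem : ν + s • μ ∈ Γ := hA ν (subset_closure hν) (s • μ) (hcone s hs μ hμ)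
      exact le_biSup (fun ρ => ((f ρ : ℝ) : EReal)) hmem
  · rw [← hflim μ hμ]
    apply Filter.limsup_le_limsup
    · filter_upwards [Filter.eventually_gt_atTop (0:ℝ)] with s hs
      have h := hmono (s • μ) (hcone s hs μ hμ) ν hν
      have : s • μ + ν = ν + s • μ := by abel
      rw [this] at h
      exact_mod_cast h
    · isBoundedDefault
    · isBoundedDefault
end

section
/- Let A, B, C be real n×n matrices with A + Aᵀ positive definite. For q ∈ {1,...,n}, let λ_q(A,·) denote the q-th smallest eigenvalue of ¼(A+Aᵀ)(B+Bᵀ). Then λ_q(A,B) + λ_1(A,C) ≤ λ_q(A, B+C) ≤ λ_q(A,B) + λ_n(A,C). -/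
/-!
Write `A + Aᵀ = PᵀP`. Since `MN` and `NM` have the same characteristic polynomial,
`¼ PᵀP (D + Dᵀ)` has that of `¼ P (D + Dᵀ) Pᵀ`, a symmetric matrix depending additively on `D`.
So the `λ_q(A, ·)` are the ordered eigenvalues of symmetric operators `T_B`, `T_C` and
`T_{B+C} = T_B + T_C`, and the claim is Weyl's inequality. That follows from the Courant–Fischer
dimension count: if `⟪T x, x⟫ + c‖x‖² ≤ ⟪U x, x⟫` for all `x`, a nonzero vector in the span of the
top `i + 1` eigenvectors of `T` and of the bottom `n - i` eigenvectors of `U` gives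
`λ_i(T) + c ≤ λ_i(U)`.
-/

open Matrix

/-- The matrix `¼(A+Aᵀ)(B+Bᵀ)`, whose eigenvalues define `λ(A,B)`. -/
noncomputable def symProd (n : ℕ) (A B : Matrix (Fin n) (Fin n) ℝ) :
    Matrix (Fin n) (Fin n) ℝ :=
  (1 / 4 : ℝ) • ((A + Aᵀ) * (B + Bᵀ))

open Module Submodule RCLike

theorem Submodule.exists_mem_inf_ne_zero_of_finrank_lt {K V : Type*} [DivisionRing K]
    [AddCommGroup V] [Module K V] [FiniteDimensional K V] (U W : Submodule K V)
    (h : finrank K V < finrank K U + finrank K W) : ∃ x ∈ U ⊓ W, x ≠ 0 := by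
  apply exists_mem_ne_zero_of_ne_bot
  intro hbot
  have := finrank_sup_add_finrank_inf_eq U W
  rw [hbot, finrank_bot] at this
  have := (U ⊔ W).finrank_le
  omega

theorem OrthonormalBasis.repr_apply_eq_zero_of_mem_span {ι 𝕜 E : Type*} [RCLike 𝕜]
    [NormedAddCommGroup E] [InnerProductSpace 𝕜 E] [Fintype ι] (b : OrthonormalBasis ι 𝕜 E)
    {s : Set ι} {x : E} (hx : x ∈ span 𝕜 (b '' s)) {i : ι} (hi : i ∉ s) : b.repr x i = 0 := by
  rw [← b.coe_toBasis] at hx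
  rw [← b.coe_toBasis_repr_apply, ← Finsupp.notMem_support_iff]
  exact fun h => hi (b.toBasis.repr_support_subset_of_mem_span s hx h)

theorem OrthonormalBasis.mem_span_image_univ {ι 𝕜 E : Type*} [RCLike 𝕜]
    [NormedAddCommGroup E] [InnerProductSpace 𝕜 E] [Fintype ι] (b : OrthonormalBasis ι 𝕜 E)
    (x : E) : x ∈ span 𝕜 (b '' Set.univ) := by
  rw [Set.image_univ, ← b.coe_toBasis]
  exact b.toBasis.mem_span x

theorem OrthonormalBasis.finrank_span_image {ι 𝕜 E : Type*} [RCLike 𝕜]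
    [NormedAddCommGroup E] [InnerProductSpace 𝕜 E] [Fintype ι] (b : OrthonormalBasis ι 𝕜 E)
    (s : Finset ι) : finrank 𝕜 (span 𝕜 (b '' s)) = s.card := by
  have h := finrank_span_eq_card
    (b.orthonormal.linearIndependent.comp (Subtype.val : s → ι) Subtype.val_injective)
  have hrange : Set.range (b ∘ Subtype.val : s → E) = b '' s := by
    rw [Set.range_comp, Subtype.range_coe]
  rwa [hrange, Fintype.card_coe] at h

theorem Monotone.eq_of_map_univ_val_eq {α : Type*} [PartialOrder α] {n : ℕ} {f g : Fin n → α}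
    (hf : Monotone f) (hg : Monotone g)
    (h : Multiset.map f Finset.univ.val = Multiset.map g Finset.univ.val) : f = g := by
  rw [Fin.univ_val_map, Fin.univ_val_map, Multiset.coe_eq_coe] at h
  exact List.ofFn_injective (h.eq_of_sortedLE hf.sortedLE_ofFn hg.sortedLE_ofFn)

namespace LinearMap.IsSymmetric

variable {𝕜 E : Type*} [RCLike 𝕜] [NormedAddCommGroup E] [InnerProductSpace 𝕜 E]
  [FiniteDimensional 𝕜 E] {n : ℕ} {T : E →ₗ[𝕜] E} (hT : T.IsSymmetric) (hn : finrank 𝕜 E = n)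

theorem re_inner_apply_self_eq_sum (x : E) :
    re (inner 𝕜 (T x) x) =
      ∑ i, hT.eigenvalues hn i * ‖(hT.eigenvectorBasis hn).repr x i‖ ^ 2 := by
  rw [← (hT.eigenvectorBasis hn).repr.inner_map_map, PiLp.inner_apply, map_sum]
  refine Finset.sum_congr rfl fun i _ => ?_
  rw [hT.eigenvectorBasis_apply_self_apply, ← smul_eq_mul, inner_smul_left, conj_ofReal,
    re_ofReal_mul, inner_self_eq_norm_sq]

theorem mul_norm_sq_le_re_inner_apply_self {s : Set (Fin n)} {c : ℝ}
    (hc : ∀ i ∈ s, c ≤ hT.eigenvalues hn i) {x : E}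
    (hx : x ∈ span 𝕜 (hT.eigenvectorBasis hn '' s)) :
    c * ‖x‖ ^ 2 ≤ re (inner 𝕜 (T x) x) := by
  rw [hT.re_inner_apply_self_eq_sum hn, ← (hT.eigenvectorBasis hn).repr.norm_map,
    EuclideanSpace.norm_sq_eq, Finset.mul_sum]
  refine Finset.sum_le_sum fun i _ => ?_
  by_cases hi : i ∈ s
  · exact mul_le_mul_of_nonneg_right (hc i hi) (sq_nonneg _)
  · simp [(hT.eigenvectorBasis hn).repr_apply_eq_zero_of_mem_span hx hi]

theorem re_inner_apply_self_le_mul_norm_sq {s : Set (Fin n)} {c : ℝ}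
    (hc : ∀ i ∈ s, hT.eigenvalues hn i ≤ c) {x : E}
    (hx : x ∈ span 𝕜 (hT.eigenvectorBasis hn '' s)) :
    re (inner 𝕜 (T x) x) ≤ c * ‖x‖ ^ 2 := by
  rw [hT.re_inner_apply_self_eq_sum hn, ← (hT.eigenvectorBasis hn).repr.norm_map,
    EuclideanSpace.norm_sq_eq, Finset.mul_sum]
  refine Finset.sum_le_sum fun i _ => ?_
  by_cases hi : i ∈ s
  · exact mul_le_mul_of_nonneg_right (hc i hi) (sq_nonneg _)
  · simp [(hT.eigenvectorBasis hn).repr_apply_eq_zero_of_mem_span hx hi]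

theorem eigenvalues_add_le_eigenvalues {U : E →ₗ[𝕜] E} (hU : U.IsSymmetric) {c : ℝ}
    (h : ∀ x, re (inner 𝕜 (T x) x) + c * ‖x‖ ^ 2 ≤ re (inner 𝕜 (U x) x)) (i : Fin n) :
    hT.eigenvalues hn i + c ≤ hU.eigenvalues hn i := by
  obtain ⟨x, ⟨hxT, hxU⟩, hx⟩ := exists_mem_inf_ne_zero_of_finrank_lt
    (span 𝕜 (hT.eigenvectorBasis hn '' ↑(Finset.Iic i)))
    (span 𝕜 (hU.eigenvectorBasis hn '' ↑(Finset.Ici i))) (by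
      rw [OrthonormalBasis.finrank_span_image, OrthonormalBasis.finrank_span_image, Fin.card_Iic,
        Fin.card_Ici]
      omega)
  have hT_lower := hT.mul_norm_sq_le_re_inner_apply_self hn
    (fun j hj => hT.eigenvalues_antitone hn (Finset.mem_Iic.mp hj)) hxT
  have hU_upper := hU.re_inner_apply_self_le_mul_norm_sq hn
    (fun j hj => hU.eigenvalues_antitone hn (Finset.mem_Ici.mp hj)) hxU
  have hx_pos : 0 < ‖x‖ ^ 2 := by positivity
  nlinarith [h x]

theorem eigenvalues_add_const_le_eigenvalues_add {S : E →ₗ[𝕜] E} (hS : S.IsSymmetric) {c : ℝ}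
    (hc : ∀ j, c ≤ hS.eigenvalues hn j) (i : Fin n) :
    hT.eigenvalues hn i + c ≤ (hT.add hS).eigenvalues hn i := by
  refine hT.eigenvalues_add_le_eigenvalues hn (hT.add hS) (fun x => ?_) i
  rw [add_apply, inner_add_left, map_add]
  gcongr
  exact hS.mul_norm_sq_le_re_inner_apply_self hn (fun j _ => hc j)
    ((hS.eigenvectorBasis hn).mem_span_image_univ x)

theorem eigenvalues_add_le_eigenvalues_add_const {S : E →ₗ[𝕜] E} (hS : S.IsSymmetric) {c : ℝ}
    (hc : ∀ j, hS.eigenvalues hn j ≤ c) (i : Fin n) :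
    (hT.add hS).eigenvalues hn i ≤ hT.eigenvalues hn i + c := by
  suffices (hT.add hS).eigenvalues hn i + -c ≤ hT.eigenvalues hn i by linarith
  refine (hT.add hS).eigenvalues_add_le_eigenvalues hn hT (fun x => ?_) i
  rw [add_apply, inner_add_left, map_add]
  have := hS.re_inner_apply_self_le_mul_norm_sq hn (fun j _ => hc j)
    ((hS.eigenvectorBasis hn).mem_span_image_univ x)
  linarith

/-- `eigenvalues` lists the eigenvalues in decreasing order, hence the reversal. -/
theorem eigenvalues_rev_eq_of_roots_charpoly {μ : Fin n → ℝ} (hμ : Monotone μ)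
    (h : T.charpoly.roots = Multiset.map (fun i => (μ i : 𝕜)) Finset.univ.val) (i : Fin n) :
    hT.eigenvalues hn i.rev = μ i := by
  have hmap : Multiset.map (hT.eigenvalues hn ∘ Fin.rev) Finset.univ.val =
      Multiset.map μ Finset.univ.val := by
    have := congrArg (Multiset.map re) ((hT.roots_charpoly_eq_eigenvalues hn).symm.trans h)
    simp only [Multiset.map_map, Function.comp_def, ofReal_re] at this
    rw [← Multiset.map_map, show Multiset.map Fin.rev Finset.univ.val = Finset.univ.val from
      Multiset.map_univ_val_equiv Fin.revPerm]
    exact this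
  exact congrFun
    (((hT.eigenvalues_antitone hn).comp Fin.rev_anti).eq_of_map_univ_val_eq hμ hmap) i

end LinearMap.IsSymmetric

namespace Matrix

variable {ι : Type*} [Fintype ι]

open scoped MatrixOrder in
theorem PosSemidef.exists_eq_transpose_mul_self {S : Matrix ι ι ℝ} (hS : S.PosSemidef) :
    ∃ P : Matrix ι ι ℝ, S = Pᵀ * P := by
  classical
  simpa only [star_eq_conjTranspose, conjTranspose_eq_transpose_of_trivial] using
    CStarAlgebra.nonneg_iff_eq_star_mul_self.mp hS.nonneg

theorem charpoly_toEuclideanLin [DecidableEq ι] {𝕜 : Type*} [RCLike 𝕜] (M : Matrix ι ι 𝕜) :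
    (toEuclideanLin M).charpoly = M.charpoly := by
  rw [toEuclideanLin_eq_toLin_orthonormal,
    ← LinearMap.charpoly_toMatrix _ (EuclideanSpace.basisFun ι 𝕜).toBasis, LinearMap.toMatrix_toLin]

/-- The paper's `P' B_sym P'ᵀ` with `A_sym = P'ᵀP'`, written in terms of `P = √2 P'`. -/
noncomputable def symConj (P D : Matrix ι ι ℝ) : Matrix ι ι ℝ :=
  (1 / 4 : ℝ) • (P * (D + Dᵀ) * Pᵀ)

theorem isHermitian_symConj (P D : Matrix ι ι ℝ) : (symConj P D).IsHermitian := by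
  rw [IsHermitian, conjTranspose_eq_transpose_of_trivial, symConj, transpose_smul,
    transpose_mul, transpose_mul, transpose_transpose, transpose_add, transpose_transpose,
    add_comm, Matrix.mul_assoc]

theorem symConj_add (P D D' : Matrix ι ι ℝ) :
    symConj P (D + D') = symConj P D + symConj P D' := by
  simp only [symConj, transpose_add, ← smul_add]
  congr 1
  noncomm_ring

end Matrix

theorem charpoly_symProd_eq_charpoly_symConj {n : ℕ} {A P : Matrix (Fin n) (Fin n) ℝ}
    (hP : A + Aᵀ = Pᵀ * P) (D : Matrix (Fin n) (Fin n) ℝ) :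
    (symProd n A D).charpoly = (symConj P D).charpoly := by
  rw [symProd, symConj, hP, Matrix.mul_assoc, ← Matrix.mul_smul, charpoly_mul_comm,
    Matrix.smul_mul, Matrix.mul_assoc]

theorem stmt_9 (n : ℕ) (hn : 0 < n) (A B C : Matrix (Fin n) (Fin n) ℝ)
    (hA : (A + Aᵀ).PosDef)
    (μ ν ξ : Fin n → ℝ) (hμm : Monotone μ) (hνm : Monotone ν) (hξm : Monotone ξ)
    (hμ : (symProd n A B).charpoly.roots = Multiset.map μ Finset.univ.val)
    (hν : (symProd n A C).charpoly.roots = Multiset.map ν Finset.univ.val)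
    (hξ : (symProd n A (B + C)).charpoly.roots = Multiset.map ξ Finset.univ.val)
    (q : Fin n) :
    μ q + ν ⟨0, hn⟩ ≤ ξ q ∧ ξ q ≤ μ q + ν ⟨n - 1, by omega⟩ := by
  obtain ⟨P, hP⟩ := hA.posSemidef.exists_eq_transpose_mul_self
  have hd : finrank ℝ (EuclideanSpace ℝ (Fin n)) = n := finrank_euclideanSpace_fin
  have hT (D : Matrix (Fin n) (Fin n) ℝ) : (toEuclideanLin (symConj P D)).IsSymmetric :=
    isSymmetric_toEuclideanLin_iff.mpr (isHermitian_symConj P D)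
  have hroots (D : Matrix (Fin n) (Fin n) ℝ) :
      (toEuclideanLin (symConj P D)).charpoly.roots = (symProd n A D).charpoly.roots := by
    rw [charpoly_toEuclideanLin, charpoly_symProd_eq_charpoly_symConj hP]
  have eB := (hT B).eigenvalues_rev_eq_of_roots_charpoly hd hμm (by simpa [hroots] using hμ)
  have eC := (hT C).eigenvalues_rev_eq_of_roots_charpoly hd hνm (by simpa [hroots] using hν)
  have eBC := ((hT B).add (hT C)).eigenvalues_rev_eq_of_roots_charpoly hd hξm
    (by simpa [← map_add, ← symConj_add, hroots] using hξ)
  refine ⟨?_, ?_⟩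
  · have := (hT B).eigenvalues_add_const_le_eigenvalues_add hd (hT C) (c := ν ⟨0, hn⟩)
      (fun j => by rw [← j.rev_rev, eC]; exact hνm (Nat.zero_le _)) q.rev
    rwa [eB, eBC] at this
  · have := (hT B).eigenvalues_add_le_eigenvalues_add_const hd (hT C) (c := ν ⟨n - 1, by omega⟩)
      (fun j => by rw [← j.rev_rev, eC]; exact hνm (Nat.le_sub_one_of_lt j.rev.isLt)) q.rev
    rwa [eB, eBC] at this
end

section
/- Let D = diag(μ_1,...,μ_n) be a real diagonal matrix with μ_1 ≤ ... ≤ μ_n and let p ∈ {1,...,n}. The function B ↦ σ_p(λ(B)) (the p-th elementary symmetric polynomial of the eigenvalues of the symmetric matrix B) has first partial derivatives at D given by ∂σ_p(λ(B))/∂b_{jk}|_{B=D} = σ_{p-1}(μ|j) δ_{jk}, and second partial derivatives: ∂²σ_p(λ(B))/(∂b_{lm}∂b_{jk})|_{B=D} = σ_{p-2}(μ|jl) if j=k, l=m, l≠j; = -½σ_{p-2}(μ|jk) if j=l, k=m, k≠j or j=m, k=l, k≠j; and = 0 otherwise. -/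
open Matrix

/-- `σ_p` for integer `p`, with `σ_p = 0` for `p < 0`. -/
noncomputable def esymmZ (n : ℕ) (p : ℤ) (μ : Fin n → ℝ) : ℝ :=
  if 0 ≤ p then esymm n p.toNat μ else 0

/-- Sum of all `p×p` principal minors of `M` (read off from the characteristic
polynomial); it equals `σ_p` of the eigenvalues of `M` when `M` is symmetric. -/
noncomputable def pMinorSum (n p : ℕ) (M : Matrix (Fin n) (Fin n) ℝ) : ℝ :=
  (-1 : ℝ) ^ p * M.charpoly.coeff (n - p)

/-- The symmetrization `½(B+Bᵀ)` of a square array, as a matrix. -/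
noncomputable def symHalf (n : ℕ) (B : Fin n → Fin n → ℝ) : Matrix (Fin n) (Fin n) ℝ :=
  (1 / 2 : ℝ) • (Matrix.of B + (Matrix.of B)ᵀ)

/-- `σ_p(λ(B))`: the `p`-th elementary symmetric function of the eigenvalues of the
symmetrization of `B`, expressed via principal minors. -/
noncomputable def sigmaLam (n p : ℕ) (B : Fin n → Fin n → ℝ) : ℝ :=
  pMinorSum n p (symHalf n B)

/-- The diagonal array with diagonal `μ`. -/
noncomputable def diagFun (n : ℕ) (μ : Fin n → ℝ) : Fin n → Fin n → ℝ :=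
  fun i j => if i = j then μ i else 0

/-- The single-entry direction `e_{jk}` (as an array). -/
noncomputable def entryDir (n : ℕ) (j k : Fin n) : Fin n → Fin n → ℝ :=
  fun a b => if a = j ∧ b = k then 1 else 0

/-!
`σ_p(λ(B))` is, up to sign, a coefficient of the characteristic polynomial of the symmetrization
of `B`, hence a polynomial in the entries of `B`. Its first and second derivatives at a diagonal
matrix `D = diag μ` are therefore read off along the lines `D + t E_ab + s E_cd`. If `E_ab` and
`E_cd` are off-diagonal, the only permutation besides the identity that can contribute to
`det (X - D - t E_ab - s E_cd)` is the transposition `(a b)`, and only when `(c, d) = (b, a)`;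
so `σ_p` stays equal to `σ_p(μ)` except for the term `-t s σ_{p-2}(μ|ab)`. A diagonal direction
moves a single entry of `μ`, in which `σ_p(μ)` is affine with slope `σ_{p-1}(μ|a)`; this slope is
in turn affine in `μ_c` with slope `σ_{p-2}(μ|ac)`. Symmetrizing the directions produces the
factors `1` and `-½`.
-/

open Polynomial

theorem Equiv.Perm.eq_one_or_eq_swap_of_forall {ι : Type*} [DecidableEq ι] {a b c d : ι}
    (hab : a ≠ b) (hcd : c ≠ d) (σ : Equiv.Perm ι)
    (h : ∀ i, σ i = i ∨ (σ i = a ∧ i = b) ∨ (σ i = c ∧ i = d)) :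
    σ = 1 ∨ (c = b ∧ d = a ∧ σ = Equiv.swap a b) := by
  by_cases hσ : σ = 1
  · exact Or.inl hσ
  obtain ⟨i, hi⟩ : ∃ i, σ i ≠ i := by
    by_contra! hc; exact hσ (Equiv.ext hc)
  have hinj := σ.injective
  have key : c = b ∧ d = a := by
    have := h i; have := h a; have := h b; have := h c; have := h d
    grind [Function.Injective]
  refine Or.inr ⟨key.1, key.2, Equiv.ext fun k => ?_⟩
  have := h k; have := h a; have := h b; have := h i
  grind [Function.Injective]

namespace Matrix

variable {R ι : Type*} [CommRing R] [DecidableEq ι]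

theorem diagonal_add_single_add_single_apply (w : ι → R) (a b c d : ι) (x y : R) (i j : ι) :
    (diagonal w + single a b x + single c d y) i j
      = (if i = j then w i else 0) + (if i = a ∧ j = b then x else 0)
        + (if i = c ∧ j = d then y else 0) := by
  simp only [add_apply, diagonal_apply, single_apply]
  grind

theorem diagonal_add_single_add_single_apply_self (w : ι → R) {a b c d : ι}
    (hab : a ≠ b) (hcd : c ≠ d) (x y : R) (i : ι) :
    (diagonal w + single a b x + single c d y) i i = w i := by
  rw [diagonal_add_single_add_single_apply]
  grind

variable [Fintype ι]

theorem prod_diagonal_add_single_add_single_perm_eq_zero (w : ι → R) {a b c d : ι}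
    (hab : a ≠ b) (hcd : c ≠ d) (x y : R) {σ : Equiv.Perm ι}
    (hσ : ¬(σ = 1 ∨ (c = b ∧ d = a ∧ σ = Equiv.swap a b))) :
    ∏ i, (diagonal w + single a b x + single c d y) (σ i) i = 0 := by
  by_contra hne
  refine hσ (σ.eq_one_or_eq_swap_of_forall hab hcd fun i => ?_)
  by_contra hi
  refine hne (Finset.prod_eq_zero (Finset.mem_univ i) ?_)
  rw [diagonal_add_single_add_single_apply]
  grind

theorem det_diagonal_add_single_add_single (w : ι → R) {a b c d : ι}
    (hab : a ≠ b) (hcd : c ≠ d) (hcyc : ¬(c = b ∧ d = a)) (x y : R) :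
    (diagonal w + single a b x + single c d y).det = ∏ i, w i := by
  rw [det_apply', Finset.sum_eq_single 1]
  · simp [diagonal_add_single_add_single_apply_self w hab hcd]
  · intro σ _ hσ
    rw [prod_diagonal_add_single_add_single_perm_eq_zero w hab hcd x y (by tauto), mul_zero]
  · simp

theorem det_diagonal_add_single_add_single_swap (w : ι → R) {a b : ι} (hab : a ≠ b) (x y : R) :
    (diagonal w + single a b x + single b a y).det
      = ∏ i, w i - x * y * ∏ i ∈ {a, b}ᶜ, w i := by
  set M := diagonal w + single a b x + single b a y
  have hswap_fix : ∀ i ∈ ({a, b}ᶜ : Finset ι), M (Equiv.swap a b i) i = w i := by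
    intro i hi
    simp only [Finset.mem_compl, Finset.mem_insert, Finset.mem_singleton, not_or] at hi
    rw [Equiv.swap_apply_of_ne_of_ne hi.1 hi.2]
    exact diagonal_add_single_add_single_apply_self w hab hab.symm x y i
  rw [det_apply', Fintype.sum_eq_add 1 (Equiv.swap a b) (Ne.symm (mt Equiv.swap_eq_one_iff.mp hab))]
  · have hMab : M a b = x := by simp [M, hab]
    have hMba : M b a = y := by simp [M, hab.symm]
    rw [Equiv.Perm.sign_one, Equiv.Perm.sign_swap hab,
      ← Finset.prod_mul_prod_compl {a, b} (fun i => M (Equiv.swap a b i) i), Finset.prod_pair hab,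
      Finset.prod_congr rfl hswap_fix, Equiv.swap_apply_left, Equiv.swap_apply_right, hMab, hMba]
    simp only [M, Equiv.Perm.coe_one, id_eq,
      diagonal_add_single_add_single_apply_self w hab hab.symm, Units.val_one, Units.val_neg,
      Int.cast_one, Int.cast_neg]
    ring
  · intro σ hσ
    rw [prod_diagonal_add_single_add_single_perm_eq_zero w hab hab.symm x y (by tauto), mul_zero]

theorem charmatrix_diagonal_add_single_add_single (ν : ι → R) {a b c d : ι}
    (hab : a ≠ b) (hcd : c ≠ d) (x y : R) :
    charmatrix (diagonal ν + single a b x + single c d y)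
      = diagonal (fun i => X - C (ν i)) + single a b (-C x) + single c d (-C y) := by
  ext1 i j
  rw [charmatrix_apply, diagonal_add_single_add_single_apply,
    diagonal_add_single_add_single_apply, diagonal_apply]
  split_ifs <;> simp_all [add_comm]

theorem charpoly_diagonal_add_single_add_single (ν : ι → R) {a b c d : ι}
    (hab : a ≠ b) (hcd : c ≠ d) (hcyc : ¬(c = b ∧ d = a)) (x y : R) :
    (diagonal ν + single a b x + single c d y).charpoly = ∏ i, (X - C (ν i)) := by
  rw [charpoly, charmatrix_diagonal_add_single_add_single ν hab hcd,
    det_diagonal_add_single_add_single _ hab hcd hcyc]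

theorem charpoly_diagonal_add_single_add_single_swap (ν : ι → R) {a b : ι} (hab : a ≠ b)
    (x y : R) :
    (diagonal ν + single a b x + single b a y).charpoly
      = ∏ i, (X - C (ν i)) - C (x * y) * ∏ i ∈ {a, b}ᶜ, (X - C (ν i)) := by
  rw [charpoly, charmatrix_diagonal_add_single_add_single ν hab hab.symm,
    det_diagonal_add_single_add_single_swap _ hab, neg_mul_neg, C_mul]

end Matrix

theorem Multiset.esymm_cons_succ {R : Type*} [CommSemiring R] (r : R) (s : Multiset R) (q : ℕ) :
    (r ::ₘ s).esymm (q + 1) = s.esymm (q + 1) + r * s.esymm q := by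
  simp [Multiset.esymm, Multiset.powersetCard_cons, Multiset.map_map, Multiset.sum_map_mul_left]

theorem Multiset.esymm_zero_cons {R : Type*} [CommSemiring R] (s : Multiset R) (q : ℕ) :
    (0 ::ₘ s).esymm q = s.esymm q := by
  cases q with
  | zero => simp [Multiset.esymm]
  | succ q => rw [Multiset.esymm_cons_succ, zero_mul, add_zero]

theorem Finset.prod_X_sub_C_coeff {R ι : Type*} [CommRing R] (s : Finset ι) (f : ι → R) {k : ℕ}
    (h : k ≤ s.card) :
    (∏ i ∈ s, (X - C (f i))).coeff k
      = (-1) ^ (s.card - k) * ∑ t ∈ s.powersetCard (s.card - k), ∏ i ∈ t, f i := by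
  rw [Finset.prod, ← Function.comp_def (fun r => X - C r) f, ← Multiset.map_map,
    Multiset.prod_X_sub_C_coeff _ (by simpa using h), Multiset.card_map, Finset.esymm_map_val]
  rfl

section Esymm

variable {n : ℕ}

theorem esymm_eq_sum_powersetCard_of_eq_zero (q : ℕ) {ν : Fin n → ℝ} (s : Finset (Fin n))
    (hν : ∀ i ∉ s, ν i = 0) :
    esymm n q ν = ∑ t ∈ s.powersetCard q, ∏ i ∈ t, ν i := by
  refine (Finset.sum_subset (Finset.powersetCard_mono (Finset.subset_univ s))
    fun t ht hts => ?_).symm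
  obtain ⟨i, hit, his⟩ : ∃ i ∈ t, i ∉ s := by
    by_contra! h
    exact hts (Finset.mem_powersetCard.mpr ⟨h, (Finset.mem_powersetCard.mp ht).2⟩)
  exact Finset.prod_eq_zero hit (hν i his)

theorem esymm_succ_update (q : ℕ) (μ : Fin n → ℝ) (a : Fin n) (x : ℝ) :
    esymm n (q + 1) (Function.update μ a x)
      = esymm n (q + 1) (Function.update μ a 0) + x * esymm n q (Function.update μ a 0) := by
  have huniv : (Finset.univ : Finset (Fin n)).val = a ::ₘ (Finset.univ.erase a).val := by
    rw [← Finset.insert_val_of_notMem (Finset.notMem_erase a _),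
      Finset.insert_erase (Finset.mem_univ a)]
  have hcons : ∀ (k : ℕ) (z : ℝ), esymm n k (Function.update μ a z)
      = (z ::ₘ (Finset.univ.erase a).val.map μ).esymm k := by
    intro k z
    rw [esymm, ← Finset.esymm_map_val, huniv, Multiset.map_cons, Function.update_self]
    congr 2
    exact Multiset.map_congr rfl fun i hi =>
      Function.update_of_ne (Finset.ne_of_mem_erase (Finset.mem_val.mp hi)) _ _
  rw [hcons, hcons, hcons, Multiset.esymm_cons_succ, Multiset.esymm_zero_cons,
    Multiset.esymm_zero_cons]

theorem esymmZ_natCast (q : ℕ) (ν : Fin n → ℝ) : esymmZ n q ν = esymm n q ν := by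
  simp [esymmZ]

theorem hasDerivAt_esymmZ_update (k : ℤ) (μ : Fin n → ℝ) (a : Fin n) (x : ℝ) :
    HasDerivAt (fun x => esymmZ n k (Function.update μ a x))
      (esymmZ n (k - 1) (Function.update μ a 0)) x := by
  rcases lt_or_ge 0 k with hk | hk
  · lift k to ℕ using hk.le
    obtain ⟨q, rfl⟩ : ∃ q, k = q + 1 := ⟨k - 1, by omega⟩
    simp only [show ((q + 1 : ℕ) : ℤ) - 1 = q by omega, esymmZ_natCast]
    rw [funext (esymm_succ_update q μ a)]
    simpa using ((hasDerivAt_id x).mul_const (esymm n q (Function.update μ a 0))).const_add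
      (esymm n (q + 1) (Function.update μ a 0))
  · have hconst : ∀ ν : Fin n → ℝ, esymmZ n k ν = if k = 0 then 1 else 0 := by
      intro ν
      rcases hk.eq_or_lt with rfl | hneg
      · simp [esymmZ, esymm]
      · simp [esymmZ, hneg.ne, not_le.mpr hneg]
    have hzero : esymmZ n (k - 1) (Function.update μ a 0) = 0 := if_neg (by omega)
    simp only [hconst, hzero]
    exact hasDerivAt_const x _

theorem esymmZ_update_update_comm (k : ℤ) (μ : Fin n → ℝ) (a c : Fin n) :
    esymmZ n k (Function.update (Function.update μ a 0) c 0)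
      = esymmZ n k (Function.update (Function.update μ c 0) a 0) := by
  rcases eq_or_ne a c with rfl | hac
  · rfl
  · rw [Function.update_comm hac]

end Esymm

section PMinorSum

variable {n p : ℕ}

theorem neg_one_pow_mul_coeff_prod_X_sub_C (hpn : p ≤ n) (ν : Fin n → ℝ) :
    (-1) ^ p * (∏ i, (X - C (ν i))).coeff (n - p) = esymm n p ν := by
  rw [Finset.prod_X_sub_C_coeff _ _ (by simp), Finset.card_univ, Fintype.card_fin,
    Nat.sub_sub_self hpn, ← mul_assoc, ← pow_add, Even.neg_one_pow ⟨p, rfl⟩, one_mul, esymm]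

theorem neg_one_pow_mul_coeff_prod_compl_pair (hpn : p ≤ n) (ν : Fin n → ℝ) {a b : Fin n}
    (hab : a ≠ b) :
    (-1) ^ p * (∏ i ∈ {a, b}ᶜ, (X - C (ν i))).coeff (n - p)
      = esymmZ n ((p : ℤ) - 2) (Function.update (Function.update ν a 0) b 0) := by
  have hcard : ({a, b}ᶜ : Finset (Fin n)).card = n - 2 := by
    rw [Finset.card_compl, Finset.card_pair hab, Fintype.card_fin]
  have hn : 2 ≤ n := by simpa [Finset.card_pair hab] using Finset.card_le_univ {a, b}
  rcases lt_or_ge p 2 with hp | hp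
  · rw [coeff_eq_zero_of_natDegree_lt (by rw [natDegree_finsetProd_X_sub_C_eq_card]; omega),
      esymmZ, if_neg (by omega), mul_zero]
  · rw [show (p : ℤ) - 2 = ((p - 2 : ℕ) : ℤ) by omega, esymmZ_natCast,
      esymm_eq_sum_powersetCard_of_eq_zero _ {a, b}ᶜ fun i hi => ?_,
      Finset.prod_X_sub_C_coeff _ _ (by omega), hcard, show n - 2 - (n - p) = p - 2 by omega,
      ← mul_assoc, ← pow_add, Even.neg_one_pow ⟨p - 1, by omega⟩, one_mul]
    · refine Finset.sum_congr rfl fun t ht => Finset.prod_congr rfl fun i hi => ?_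
      have hi' := (Finset.mem_powersetCard.mp ht).1 hi
      simp only [Finset.mem_compl, Finset.mem_insert, Finset.mem_singleton, not_or] at hi'
      rw [Function.update_of_ne hi'.2, Function.update_of_ne hi'.1]
    · simp only [Finset.notMem_compl, Finset.mem_insert, Finset.mem_singleton] at hi
      rcases hi with rfl | rfl <;> simp [hab]

theorem pMinorSum_diagonal (hpn : p ≤ n) (ν : Fin n → ℝ) :
    pMinorSum n p (diagonal ν) = esymm n p ν := by
  rw [pMinorSum, charpoly_diagonal, neg_one_pow_mul_coeff_prod_X_sub_C hpn]

theorem pMinorSum_diagonal_add_single_add_single (hpn : p ≤ n) (ν : Fin n → ℝ) {a b c d : Fin n}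
    (hab : a ≠ b) (hcd : c ≠ d) (hcyc : ¬(c = b ∧ d = a)) (x y : ℝ) :
    pMinorSum n p (diagonal ν + single a b x + single c d y) = esymm n p ν := by
  rw [pMinorSum, charpoly_diagonal_add_single_add_single ν hab hcd hcyc,
    neg_one_pow_mul_coeff_prod_X_sub_C hpn]

theorem pMinorSum_diagonal_add_single_add_single_swap (hpn : p ≤ n) (ν : Fin n → ℝ)
    {a b : Fin n} (hab : a ≠ b) (x y : ℝ) :
    pMinorSum n p (diagonal ν + single a b x + single b a y)
      = esymm n p ν
        - x * y * esymmZ n ((p : ℤ) - 2) (Function.update (Function.update ν a 0) b 0) := by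
  rw [pMinorSum, charpoly_diagonal_add_single_add_single_swap ν hab, coeff_sub, coeff_C_mul,
    mul_sub, neg_one_pow_mul_coeff_prod_X_sub_C hpn, mul_left_comm,
    neg_one_pow_mul_coeff_prod_compl_pair hpn ν hab]

end PMinorSum

theorem MvPolynomial.contDiff_eval₂ {𝕜 σ R : Type*} [NontriviallyNormedField 𝕜] [Fintype σ]
    [CommSemiring R] (f : R →+* 𝕜) (P : MvPolynomial σ R) {k : WithTop ℕ∞} :
    ContDiff 𝕜 k fun x : σ → 𝕜 => P.eval₂ f x := by
  induction P using MvPolynomial.induction_on with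
  | C a => simpa using contDiff_const
  | add P Q hP hQ => simpa using hP.add hQ
  | mul_X P i hP => simpa using hP.mul (contDiff_apply 𝕜 𝕜 i)

section Calculus

variable {𝕜 E F G : Type*} [NontriviallyNormedField 𝕜]
  [NormedAddCommGroup E] [NormedSpace 𝕜 E] [NormedAddCommGroup F] [NormedSpace 𝕜 F]
  [NormedAddCommGroup G] [NormedSpace 𝕜 G]

theorem hasFDerivAt_fderiv_apply {f : E → F} {x : E} (hf : DifferentiableAt 𝕜 (fderiv 𝕜 f) x)
    (v : E) : HasFDerivAt (fun y => fderiv 𝕜 f y v) ((fderiv 𝕜 (fderiv 𝕜 f) x).flip v) x := by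
  simpa using hf.hasFDerivAt.clm_apply (hasFDerivAt_const v x)

theorem fderiv_fderiv_apply_eq_of_hasLineDerivAt {f : E → F} {x v w : E} {c : F}
    (hf : DifferentiableAt 𝕜 (fderiv 𝕜 f) x)
    (h : HasLineDerivAt 𝕜 (fun y => fderiv 𝕜 f y v) c x w) :
    fderiv 𝕜 (fderiv 𝕜 f) x w v = c :=
  ((hasFDerivAt_fderiv_apply hf v).hasLineDerivAt w).unique h

theorem fderiv_comp_clm_apply {f : F → G} (L : E →L[𝕜] F) {x : E}
    (hf : DifferentiableAt 𝕜 f (L x)) (v : E) :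
    fderiv 𝕜 (f ∘ L) x v = fderiv 𝕜 f (L x) (L v) := by
  rw [fderiv_comp x hf L.differentiableAt, L.fderiv]
  rfl

theorem fderiv_fderiv_apply_comp_clm {f : F → G} (hf : ContDiff 𝕜 2 f) (L : E →L[𝕜] F)
    (x v w : E) :
    fderiv 𝕜 (fun y => fderiv 𝕜 (f ∘ L) y v) x w = fderiv 𝕜 (fderiv 𝕜 f) (L x) (L w) (L v) := by
  have hf1 : Differentiable 𝕜 f := hf.differentiable (by norm_num)
  have hf2 : Differentiable 𝕜 (fderiv 𝕜 f) :=
    (hf.fderiv_right (m := 1) (by norm_num)).differentiable (by norm_num)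
  have hfun : (fun y => fderiv 𝕜 (f ∘ L) y v) = (fun z => fderiv 𝕜 f z (L v)) ∘ L :=
    funext fun y => fderiv_comp_clm_apply L (hf1 _) v
  rw [hfun, ((hasFDerivAt_fderiv_apply (hf2 (L x)) (L v)).comp x L.hasFDerivAt).fderiv]
  rfl

end Calculus

noncomputable def pMinorSumFun (n p : ℕ) (A : Fin n → Fin n → ℝ) : ℝ :=
  pMinorSum n p (Matrix.of A)

noncomputable def symmetrizeCLM (ι : Type*) [Fintype ι] :
    (ι → ι → ℝ) →L[ℝ] (ι → ι → ℝ) :=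
  LinearMap.toContinuousLinearMap
    { toFun := fun B a b => (B a b + B b a) / 2
      map_add' := fun B C => by ext; simp only [Pi.add_apply]; ring
      map_smul' := fun c B => by
        ext; simp only [Pi.smul_apply, smul_eq_mul, RingHom.id_apply]; ring }

section PMinorSumFun

variable {n p : ℕ}

theorem symmetrizeCLM_apply (B : Fin n → Fin n → ℝ) (a b : Fin n) :
    symmetrizeCLM (Fin n) B a b = (B a b + B b a) / 2 :=
  rfl

theorem sigmaLam_eq_comp : sigmaLam n p = pMinorSumFun n p ∘ symmetrizeCLM (Fin n) := by
  ext B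
  simp only [sigmaLam, pMinorSumFun, Function.comp_apply, symHalf]
  congr 1
  ext a b
  simp only [Matrix.smul_apply, Matrix.add_apply, transpose_apply, of_apply, symmetrizeCLM_apply,
    smul_eq_mul]
  ring

theorem symmetrizeCLM_diagFun (ν : Fin n → ℝ) :
    symmetrizeCLM (Fin n) (diagFun n ν) = diagFun n ν := by
  ext a b
  simp only [symmetrizeCLM_apply, diagFun]
  grind

theorem symmetrizeCLM_entryDir (j k : Fin n) :
    symmetrizeCLM (Fin n) (entryDir n j k) = (1 / 2 : ℝ) • (entryDir n j k + entryDir n k j) := by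
  ext a b
  simp only [symmetrizeCLM_apply, Pi.smul_apply, Pi.add_apply, smul_eq_mul, entryDir]
  grind

theorem contDiff_pMinorSumFun {k : WithTop ℕ∞} : ContDiff ℝ k (pMinorSumFun n p) := by
  have h : pMinorSumFun n p = fun A => (-1) ^ p * MvPolynomial.eval₂ (Int.castRingHom ℝ)
      (fun ij : Fin n × Fin n => A ij.1 ij.2) ((charpoly.univ ℤ (Fin n)).coeff (n - p)) := by
    ext A
    rw [pMinorSumFun, pMinorSum, ← MvPolynomial.coe_eval₂Hom, charpoly.univ_coeff_eval₂Hom]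
    rfl
  rw [h]
  exact contDiff_const.mul ((MvPolynomial.contDiff_eval₂ _ _).comp
    (contDiff_pi.2 fun ij => contDiff_apply_apply ℝ ℝ ij.1 ij.2))

theorem differentiable_pMinorSumFun : Differentiable ℝ (pMinorSumFun n p) :=
  (contDiff_pMinorSumFun (k := 1)).differentiable one_ne_zero

theorem diagFun_add_smul_entryDir_self (ν : Fin n → ℝ) (a : Fin n) (t : ℝ) :
    diagFun n ν + t • entryDir n a a = diagFun n (Function.update ν a (ν a + t)) := by
  ext i j
  simp only [Pi.add_apply, Pi.smul_apply, smul_eq_mul, diagFun, entryDir, Function.update_apply]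
  grind

theorem of_diagFun_add_smul_entryDir_add_smul_entryDir (ν : Fin n → ℝ) (a b c d : Fin n)
    (t s : ℝ) :
    Matrix.of (diagFun n ν + t • entryDir n a b + s • entryDir n c d)
      = diagonal ν + single a b t + single c d s := by
  ext i j
  rw [of_apply, diagonal_add_single_add_single_apply]
  simp only [Pi.add_apply, Pi.smul_apply, smul_eq_mul, diagFun, entryDir]
  grind

theorem pMinorSumFun_diagFun (hpn : p ≤ n) (ν : Fin n → ℝ) :
    pMinorSumFun n p (diagFun n ν) = esymm n p ν := by
  rw [pMinorSumFun, ← pMinorSum_diagonal hpn]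
  rfl

end PMinorSumFun

section Derivatives

variable {n p : ℕ}

theorem differentiable_fderiv_pMinorSumFun : Differentiable ℝ (fderiv ℝ (pMinorSumFun n p)) :=
  (contDiff_pMinorSumFun (k := 2).fderiv_right (m := 1) (by norm_num)).differentiable one_ne_zero

theorem fderiv_pMinorSumFun_apply_eq {A V : Fin n → Fin n → ℝ} {c : ℝ}
    (h : HasLineDerivAt ℝ (pMinorSumFun n p) c A V) : fderiv ℝ (pMinorSumFun n p) A V = c := by
  rw [← differentiable_pMinorSumFun.differentiableAt.lineDeriv_eq_fderiv, h.lineDeriv]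

theorem pMinorSumFun_diagFun_add_smul_entryDir_add_smul_entryDir (hpn : p ≤ n)
    (ν : Fin n → ℝ) {a b c d : Fin n} (hab : a ≠ b) (hcd : c ≠ d) (hcyc : ¬(c = b ∧ d = a))
    (t s : ℝ) :
    pMinorSumFun n p (diagFun n ν + t • entryDir n a b + s • entryDir n c d) = esymm n p ν := by
  rw [pMinorSumFun, of_diagFun_add_smul_entryDir_add_smul_entryDir,
    pMinorSum_diagonal_add_single_add_single hpn ν hab hcd hcyc]

theorem pMinorSumFun_diagFun_add_smul_entryDir (hpn : p ≤ n) (ν : Fin n → ℝ) {a b : Fin n}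
    (hab : a ≠ b) (t : ℝ) :
    pMinorSumFun n p (diagFun n ν + t • entryDir n a b) = esymm n p ν := by
  simpa using pMinorSumFun_diagFun_add_smul_entryDir_add_smul_entryDir hpn ν hab hab
    (fun h => hab h.1) t 0

theorem pMinorSumFun_diagFun_add_smul_entryDir_add_smul_entryDir_swap (hpn : p ≤ n)
    (ν : Fin n → ℝ) {a b : Fin n} (hab : a ≠ b) (t s : ℝ) :
    pMinorSumFun n p (diagFun n ν + t • entryDir n a b + s • entryDir n b a)
      = esymm n p ν
        - t * s * esymmZ n ((p : ℤ) - 2) (Function.update (Function.update ν a 0) b 0) := by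
  rw [pMinorSumFun, of_diagFun_add_smul_entryDir_add_smul_entryDir,
    pMinorSum_diagonal_add_single_add_single_swap hpn ν hab]

theorem fderiv_pMinorSumFun_diagFun (hpn : p ≤ n) (ν : Fin n → ℝ) (c d : Fin n) :
    fderiv ℝ (pMinorSumFun n p) (diagFun n ν) (entryDir n c d)
      = if c = d then esymmZ n ((p : ℤ) - 1) (Function.update ν c 0) else 0 := by
  apply fderiv_pMinorSumFun_apply_eq
  rw [HasLineDerivAt]
  split_ifs with hcd
  · subst hcd
    simp_rw [diagFun_add_smul_entryDir_self, pMinorSumFun_diagFun hpn, ← esymmZ_natCast]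
    exact (hasDerivAt_esymmZ_update (p : ℤ) ν c (ν c + 0)).comp_const_add (ν c) 0
  · simp_rw [pMinorSumFun_diagFun_add_smul_entryDir hpn ν hcd]
    exact hasDerivAt_const 0 _

theorem fderiv_pMinorSumFun_diagFun_add_smul_entryDir (hpn : p ≤ n) (μ : Fin n → ℝ)
    {a b : Fin n} (hab : a ≠ b) (t : ℝ) (c d : Fin n) :
    fderiv ℝ (pMinorSumFun n p) (diagFun n μ + t • entryDir n a b) (entryDir n c d)
      = if c = d then esymmZ n ((p : ℤ) - 1) (Function.update μ c 0)
        else if c = b ∧ d = a then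
          -(t * esymmZ n ((p : ℤ) - 2) (Function.update (Function.update μ a 0) b 0))
        else 0 := by
  apply fderiv_pMinorSumFun_apply_eq
  rw [HasLineDerivAt]
  split_ifs with hcd hba
  · subst hcd
    simp_rw [add_right_comm _ (t • entryDir n a b), diagFun_add_smul_entryDir_self,
      pMinorSumFun_diagFun_add_smul_entryDir hpn _ hab, ← esymmZ_natCast]
    exact (hasDerivAt_esymmZ_update (p : ℤ) μ c (μ c + 0)).comp_const_add (μ c) 0
  · obtain ⟨hcb, hda⟩ := hba
    subst c d
    simp_rw [pMinorSumFun_diagFun_add_smul_entryDir_add_smul_entryDir_swap hpn μ hab]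
    simpa using (((hasDerivAt_id (0 : ℝ)).const_mul t).mul_const
      (esymmZ n ((p : ℤ) - 2) (Function.update (Function.update μ a 0) b 0))).const_sub
      (esymm n p μ)
  · simp_rw [pMinorSumFun_diagFun_add_smul_entryDir_add_smul_entryDir hpn μ hab hcd hba]
    exact hasDerivAt_const 0 _

theorem fderiv_fderiv_pMinorSumFun_diagFun (hpn : p ≤ n) (μ : Fin n → ℝ) (a b c d : Fin n) :
    fderiv ℝ (fderiv ℝ (pMinorSumFun n p)) (diagFun n μ) (entryDir n a b) (entryDir n c d)
      = if a = b ∧ c = d ∧ a ≠ c then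
          esymmZ n ((p : ℤ) - 2) (Function.update (Function.update μ a 0) c 0)
        else if a ≠ b ∧ c = b ∧ d = a then
          -esymmZ n ((p : ℤ) - 2) (Function.update (Function.update μ a 0) b 0)
        else 0 := by
  apply fderiv_fderiv_apply_eq_of_hasLineDerivAt differentiable_fderiv_pMinorSumFun.differentiableAt
  rw [HasLineDerivAt]
  by_cases hab : a = b
  · subst hab
    simp_rw [diagFun_add_smul_entryDir_self, fderiv_pMinorSumFun_diagFun hpn]
    by_cases hcd : c = d
    · subst hcd
      by_cases hac : a = c
      · subst hac
        simp only [Function.update_idem, if_true, ne_eq, not_true_eq_false, and_false, if_false]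
        simpa using hasDerivAt_const (0 : ℝ) _
      · simp only [Function.update_comm hac, hac, true_and, ne_eq, not_false_eq_true, if_true]
        convert (hasDerivAt_esymmZ_update _ (Function.update μ c 0) a (μ a + 0)).comp_const_add
          (μ a) 0 using 2
        ring
    · simpa [hcd] using hasDerivAt_const (0 : ℝ) (0 : ℝ)
  · simp only [fderiv_pMinorSumFun_diagFun_add_smul_entryDir hpn μ hab, hab, false_and, if_false,
      Ne, not_false_eq_true, true_and]
    by_cases hcd : c = d
    · subst hcd
      have hcyc : ¬(c = b ∧ c = a) := fun h => hab (h.2.symm.trans h.1)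
      simp only [if_true, if_neg hcyc]
      exact hasDerivAt_const _ _
    · by_cases hcyc : c = b ∧ d = a
      · simp only [if_neg hcd, if_pos hcyc]
        simpa using hasDerivAt_mul_const (x := (0 : ℝ))
          (-esymmZ n ((p : ℤ) - 2) (Function.update (Function.update μ a 0) b 0))
      · simp only [if_neg hcd, if_neg hcyc]
        exact hasDerivAt_const _ _

theorem fderiv_fderiv_pMinorSumFun_diagFun_symmetrized (hpn : p ≤ n) (μ : Fin n → ℝ)
    (j k l m : Fin n) :
    fderiv ℝ (fderiv ℝ (pMinorSumFun n p)) (diagFun n μ)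
        ((1 / 2 : ℝ) • (entryDir n j k + entryDir n k j))
        ((1 / 2 : ℝ) • (entryDir n l m + entryDir n m l))
      = if j = k ∧ l = m ∧ l ≠ j then
          esymmZ n ((p : ℤ) - 2) (Function.update (Function.update μ j 0) l 0)
        else if j = l ∧ k = m ∧ k ≠ j then
          -(1 / 2) * esymmZ n ((p : ℤ) - 2) (Function.update (Function.update μ j 0) k 0)
        else if j = m ∧ k = l ∧ k ≠ j then
          -(1 / 2) * esymmZ n ((p : ℤ) - 2) (Function.update (Function.update μ j 0) k 0)
        else 0 := by
  simp only [map_smul, map_add, _root_.add_apply, _root_.smul_apply,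
    fderiv_fderiv_pMinorSumFun_diagFun hpn, smul_eq_mul]
  rcases eq_or_ne j k with rfl | hjk
  · rcases eq_or_ne l m with rfl | hlm
    · rcases eq_or_ne j l with rfl | hjl
      · simp
      · simp [hjl, Ne.symm hjl]
        ring
    · simp [hlm, Ne.symm hlm]
  · rcases em (l = j ∧ m = k) with ⟨rfl, rfl⟩ | hjl
    · simp [hjk, Ne.symm hjk, esymmZ_update_update_comm _ μ l m]
      ring
    · rcases em (l = k ∧ m = j) with ⟨rfl, rfl⟩ | hkl
      · simp [hjk, Ne.symm hjk, esymmZ_update_update_comm _ μ l m]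
        ring
      · have hjl' : ¬(j = l ∧ k = m) := fun h => hjl ⟨h.1.symm, h.2.symm⟩
        have hkl' : ¬(j = m ∧ k = l) := fun h => hkl ⟨h.2.symm, h.1.symm⟩
        simp [hjk, Ne.symm hjk, hjl, hkl, hjl', hkl', and_comm (a := m = _)]

end Derivatives

theorem stmt_11_general (n p : ℕ) (hp : 1 ≤ p) (hpn : p ≤ n)
    (μ : Fin n → ℝ) :
    (∀ j k : Fin n,
      fderiv ℝ (sigmaLam n p) (diagFun n μ) (entryDir n j k)
        = if j = k then esymm n (p - 1) (Function.update μ j 0) else 0) ∧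
    (∀ j k l m : Fin n,
      fderiv ℝ (fun B => fderiv ℝ (sigmaLam n p) B (entryDir n l m)) (diagFun n μ)
          (entryDir n j k)
        = if j = k ∧ l = m ∧ l ≠ j then
            esymmZ n ((p : ℤ) - 2) (Function.update (Function.update μ j 0) l 0)
          else if j = l ∧ k = m ∧ k ≠ j then
            -(1 / 2) * esymmZ n ((p : ℤ) - 2) (Function.update (Function.update μ j 0) k 0)
          else if j = m ∧ k = l ∧ k ≠ j then
            -(1 / 2) * esymmZ n ((p : ℤ) - 2) (Function.update (Function.update μ j 0) k 0)
          else 0) := by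
  rw [sigmaLam_eq_comp]
  refine ⟨fun j k => ?_, fun j k l m => ?_⟩
  · rw [fderiv_comp_clm_apply _ (differentiable_pMinorSumFun _), symmetrizeCLM_diagFun,
      symmetrizeCLM_entryDir, map_smul, map_add, fderiv_pMinorSumFun_diagFun hpn,
      fderiv_pMinorSumFun_diagFun hpn]
    simp only [show (p : ℤ) - 1 = ((p - 1 : ℕ) : ℤ) by omega, esymmZ_natCast]
    rcases eq_or_ne j k with rfl | hjk
    · simp only [if_true]
      ring
    · simp [hjk, Ne.symm hjk]
  · rw [fderiv_fderiv_apply_comp_clm contDiff_pMinorSumFun, symmetrizeCLM_diagFun,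
      symmetrizeCLM_entryDir, symmetrizeCLM_entryDir,
      fderiv_fderiv_pMinorSumFun_diagFun_symmetrized hpn]

theorem stmt_11 (n p : ℕ) (hp : 1 ≤ p) (hpn : p ≤ n)
    (μ : Fin n → ℝ) (hmono : Monotone μ) :
    (∀ j k : Fin n,
      fderiv ℝ (sigmaLam n p) (diagFun n μ) (entryDir n j k)
        = if j = k then esymm n (p - 1) (Function.update μ j 0) else 0) ∧
    (∀ j k l m : Fin n,
      fderiv ℝ (fun B => fderiv ℝ (sigmaLam n p) B (entryDir n l m)) (diagFun n μ)
          (entryDir n j k)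
        = if j = k ∧ l = m ∧ l ≠ j then
            esymmZ n ((p : ℤ) - 2) (Function.update (Function.update μ j 0) l 0)
          else if j = l ∧ k = m ∧ k ≠ j then
            -(1 / 2) * esymmZ n ((p : ℤ) - 2) (Function.update (Function.update μ j 0) k 0)
          else if j = m ∧ k = l ∧ k ≠ j then
            -(1 / 2) * esymmZ n ((p : ℤ) - 2) (Function.update (Function.update μ j 0) k 0)
          else 0) :=
  stmt_11_general n p hp hpn μ
end

section
/- Let p ∈ {1,...,n}, ν ∈ ℝ^n, t ∈ ℝ, and let B = diag(μ_1,...,μ_n) ∈ ℝ^{n×n} be diagonal. Then σ_p(λ(B + t ννᵀ)) = σ_p(μ) + t Σ_{j=1}^n ν_j² σ_{p-1}(μ|j), where σ_p(λ(B + t ννᵀ)) is the p-th elementary symmetric function of the eigenvalues of B + t ννᵀ (equivalently, the sum of its p×p principal minors) and σ_{p-1}(μ|j) denotes σ_{p-1} of μ with the j-th entry removed. -/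
open Matrix

open Polynomial in
/-- Matrix determinant lemma for a diagonal matrix with invertible entries. -/
lemma det_diag_rank_one {K : Type*} [Field K] {n : ℕ} (d u v : Fin n → K)
    (hd : ∀ i, d i ≠ 0) :
    (Matrix.diagonal d + Matrix.vecMulVec u v).det
      = ∏ i, d i + ∑ j, u j * v j * ∏ i ∈ Finset.univ.erase j, d i := by
  have hdet : IsUnit (Matrix.diagonal d).det := by
    rw [det_diagonal]
    exact (Finset.prod_ne_zero_iff.2 fun i _ => hd i).isUnit
  have hinv : Ring.inverse d = fun i => (d i)⁻¹ := by
    have : Ring.inverse ((⟨d, fun i => (d i)⁻¹, funext fun i => mul_inv_cancel₀ (hd i),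
        funext fun i => inv_mul_cancel₀ (hd i)⟩ : (Fin n → K)ˣ) : Fin n → K)
        = (fun i => (d i)⁻¹ : Fin n → K) := Ring.inverse_unit _
    exact this
  rw [vecMulVec_eq Unit, det_add_replicateCol_mul_replicateRow hdet, inv_diagonal, det_diagonal, det_unique, hinv]
  simp only [Matrix.add_apply, Matrix.one_apply_eq, Matrix.mul_apply, replicateRow_apply, replicateCol_apply,
    diagonal_apply, mul_ite, mul_zero, Finset.sum_ite_eq', Finset.sum_ite_eq, Finset.mem_univ, if_true]
  rw [mul_add, mul_one, Finset.mul_sum]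
  congr 1
  refine Finset.sum_congr rfl fun j _ => ?_
  rw [← Finset.mul_prod_erase _ _ (Finset.mem_univ j)]
  field_simp [hd j]

open Polynomial in
/-- The characteristic polynomial of a diagonal matrix plus a rank-one perturbation. -/
lemma charpoly_diag_rank_one {n : ℕ} (μ ν : Fin n → ℝ) (t : ℝ) :
    (Matrix.diagonal μ + t • Matrix.vecMulVec ν ν).charpoly
      = ∏ i, (X - C (μ i))
        + ∑ j, (C (-(t * ν j)) * C (ν j)) * ∏ i ∈ Finset.univ.erase j, (X - C (μ i)) := by
  set d : Fin n → ℝ[X] := fun i => X - C (μ i) with hdd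
  set u : Fin n → ℝ[X] := fun i => C (-(t * ν i)) with hud
  set v : Fin n → ℝ[X] := fun i => C (ν i) with hvd
  have hchar : charmatrix (Matrix.diagonal μ + t • Matrix.vecMulVec ν ν)
      = Matrix.diagonal d + Matrix.vecMulVec u v := by
    ext i k : 2
    by_cases h : i = k
    · subst h
      simp only [charmatrix_apply, Matrix.diagonal_apply_eq, Matrix.add_apply,
        Matrix.smul_apply, vecMulVec_apply, scalar_apply, hdd, hud, hvd, map_add,
        _root_.map_mul, map_neg, smul_eq_mul]
      ring
    · simp only [charmatrix_apply, Matrix.add_apply, Matrix.smul_apply, vecMulVec_apply,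
        Matrix.diagonal_apply_ne _ h, scalar_apply, Matrix.diagonal_apply_ne _ h,
        hdd, hud, hvd, map_add, _root_.map_mul, map_neg, smul_eq_mul, zero_add]
      ring
  rw [Matrix.charpoly, hchar]
  set K := FractionRing ℝ[X]
  set φ : ℝ[X] →+* K := algebraMap ℝ[X] K
  have hφ : Function.Injective φ := IsFractionRing.injective _ _
  apply hφ
  have hmap : ((Matrix.diagonal d + Matrix.vecMulVec u v).map φ)
      = Matrix.diagonal (φ ∘ d) + Matrix.vecMulVec (φ ∘ u) (φ ∘ v) := by
    ext i k : 2
    by_cases h : i = k <;>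
      simp [Matrix.diagonal_apply, vecMulVec_apply, h, map_add, _root_.map_mul]
  have hd : ∀ i, (φ ∘ d) i ≠ 0 := by
    intro i
    simp only [Function.comp_apply]
    rw [map_ne_zero_iff φ hφ]
    exact X_sub_C_ne_zero (μ i)
  rw [RingHom.map_det, RingHom.mapMatrix_apply, hmap, det_diag_rank_one _ _ _ hd]
  simp only [map_add, map_sum, _root_.map_mul, map_prod, Function.comp_apply, hud, hvd]

open Polynomial in
lemma coeff_prod_X_sub_C_aux {n p : ℕ} (μ : Fin n → ℝ) (s : Finset (Fin n)) (k : ℕ)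
    (h : n - p ≤ s.card) (hk : s.card - (n - p) = k) :
    (∏ i ∈ s, (X - C (μ i))).coeff (n - p)
      = (-1 : ℝ) ^ k * ∑ t ∈ s.powersetCard k, ∏ i ∈ t, μ i := by
  simp only [sub_eq_add_neg, ← map_neg C]
  rw [Finset.prod_X_add_C_coeff s (fun i => -μ i) h, hk, Finset.mul_sum]
  refine Finset.sum_congr rfl fun u hu => ?_
  have hc : u.card = k := (Finset.mem_powersetCard.1 hu).2
  rw [← hc, ← Finset.prod_const, ← Finset.prod_mul_distrib]
  exact Finset.prod_congr rfl fun i _ => (neg_one_mul _).symm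

lemma esymm_update_zero (n p : ℕ) (μ : Fin n → ℝ) (j : Fin n) :
    esymm n (p - 1) (Function.update μ j 0)
      = ∑ t ∈ (Finset.univ.erase j).powersetCard (p - 1), ∏ i ∈ t, μ i := by
  rw [esymm]
  rw [← Finset.sum_filter_add_sum_filter_not _ (fun t => j ∈ t)]
  have h1 : ∀ t ∈ Finset.filter (fun t => j ∈ t) (Finset.powersetCard (p-1) Finset.univ),
      ∏ i ∈ t, Function.update μ j 0 i = 0 := fun t ht =>
    Finset.prod_eq_zero (Finset.mem_filter.1 ht).2 (by simp)
  rw [Finset.sum_congr rfl h1, Finset.sum_const_zero, zero_add]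
  have h2 : Finset.filter (fun t => j ∉ t) (Finset.powersetCard (p-1) Finset.univ)
      = (Finset.univ.erase j).powersetCard (p - 1) := by
    ext u
    simp only [Finset.mem_filter, Finset.mem_powersetCard, Finset.subset_erase,
      Finset.subset_univ, true_and, and_comm]
  rw [h2]
  refine Finset.sum_congr rfl fun u hu => Finset.prod_congr rfl fun i hi => ?_
  have : i ≠ j := fun h => ((Finset.mem_powersetCard.1 hu).1 hi |> Finset.ne_of_mem_erase) h
  exact Function.update_of_ne this _ _

open Polynomial in
theorem stmt_14 (n p : ℕ) (hp : 1 ≤ p) (hpn : p ≤ n)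
    (μ ν : Fin n → ℝ) (t : ℝ) :
    pMinorSum n p (Matrix.diagonal μ + t • Matrix.vecMulVec ν ν)
      = esymm n p μ + t * ∑ j, ν j ^ 2 * esymm n (p - 1) (Function.update μ j 0) := by
  obtain ⟨q, rfl⟩ : ∃ q, p = q + 1 := ⟨p - 1, by omega⟩
  have hq : q + 1 - 1 = q := by omega
  rw [pMinorSum, charpoly_diag_rank_one, coeff_add, finset_sum_coeff]
  have hcard : ∀ j : Fin n, (Finset.univ.erase j).card = n - 1 := fun j => by
    rw [Finset.card_erase_of_mem (Finset.mem_univ j), Finset.card_univ, Fintype.card_fin]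
  have hA : (∏ i, (X - C (μ i))).coeff (n - (q + 1))
      = (-1 : ℝ) ^ (q + 1) * ∑ u ∈ Finset.powersetCard (q+1) Finset.univ, ∏ i ∈ u, μ i := by
    refine coeff_prod_X_sub_C_aux μ _ _ ?_ ?_ <;>
      rw [Finset.card_univ, Fintype.card_fin] <;> omega
  have hB : ∀ j : Fin n,
      ((C (-(t * ν j)) * C (ν j)) * ∏ i ∈ Finset.univ.erase j, (X - C (μ i))).coeff (n - (q + 1))
        = (-(t * ν j)) * (ν j) * ((-1 : ℝ) ^ q *
            ∑ u ∈ (Finset.univ.erase j).powersetCard q, ∏ i ∈ u, μ i) := by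
    intro j
    rw [← C_mul, coeff_C_mul]
    congr 1
    refine coeff_prod_X_sub_C_aux μ _ _ ?_ ?_ <;> rw [hcard j] <;> omega
  rw [hA, Finset.sum_congr rfl fun j _ => hB j]
  have hE : ∀ j : Fin n, esymm n (q + 1 - 1) (Function.update μ j 0)
      = ∑ u ∈ (Finset.univ.erase j).powersetCard q, ∏ i ∈ u, μ i := fun j => by
    rw [esymm_update_zero, hq]
  simp only [hE]
  simp only [esymm]
  rw [mul_add, ← mul_assoc, ← mul_pow]
  norm_num
  rw [Finset.mul_sum, Finset.mul_sum]
  rw [← Finset.sum_neg_distrib]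
  refine Finset.sum_congr rfl fun j _ => ?_
  have ha2 : ((-1 : ℝ) ^ q) * ((-1 : ℝ) ^ q) = 1 := by
    rw [← pow_add, ← two_mul, pow_mul]; norm_num
  rw [pow_succ]
  linear_combination (t * ν j ^ 2 * (∑ u ∈ (Finset.univ.erase j).powersetCard q, ∏ i ∈ u, μ i)) * ha2
end

section
/- Let Ω be a bounded domain in ℝ^n, w ∈ C²(Ω) ∩ C(Ω̄), x₀ ∈ Ω, and ε ∈ (0, min_{∂Ω} w - w(x₀)]. Set d = max_{x ∈ ∂Ω}|x - x₀|, let ω_n be the volume of the unit ball, and let P = {x ∈ Ω : |Dw(x)| < ε/d and w(y) ≥ w(x) + Dw(x)·(y-x) for all y ∈ Ω} (the set of points where w has a small-slope global supporting hyperplane). Then (ω_n/d^n) ε^n ≤ ∫_P det(D²w(x)) dx. -/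
/-!
For `‖v‖ < ε / d`, the minimum of `w - ⟪v, ·⟫` over `closure Ω` cannot lie on `frontier Ω`, so it is
a point of `P` where `∇ w = v`: the gradient map sends `P` onto the ball `B(0, ε / d)`. Its Jacobian
is `det D²w`, which is nonnegative on `P` since the Hessian is positive semidefinite at a point with
a supporting hyperplane. Two points of `P` with the same gradient `v` both realise the supremum
defining the Legendre transform `w*(v) = sup_Ω (⟪v, ·⟫ - w)`, and both are then its gradient at `v`
if it is differentiable there. Since `w*` is Lipschitz, Rademacher's theorem makes `∇ w` injective
over almost every point of the ball, and the area formula gives `∫_P det D²w = |B(0, ε / d)|`.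
-/

open MeasureTheory InnerProductSpace Set Filter Metric Bornology
open scoped RealInnerProductSpace Topology Gradient ENNReal NNReal

theorem IsLocalMin.nonneg_of_hasDerivAt_of_hasDerivAt {g g' : ℝ → ℝ} {a c : ℝ}
    (hmin : IsLocalMin g a) (hg : ∀ᶠ t in 𝓝 a, HasDerivAt g (g' t) t)
    (hg' : HasDerivAt g' c a) : 0 ≤ c := by
  -- If `c < 0`, the second derivative test makes `a` a local maximum as well, so `g` is locally
  -- constant and `c = 0`.
  by_contra! hc
  have hderiv : deriv g =ᶠ[𝓝 a] g' := hg.mono fun t ht => ht.deriv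
  have hmax : IsLocalMax g a :=
    isLocalMax_of_deriv_deriv_neg (by rwa [hderiv.deriv_eq, hg'.deriv])
      (by rw [hderiv.eq_of_nhds]; exact hmin.hasDerivAt_eq_zero hg.self_of_nhds)
      hg.self_of_nhds.continuousAt
  have hconst : ∀ᶠ t in 𝓝 a, g =ᶠ[𝓝 t] fun _ => g a :=
    (hmin.and hmax).eventually_nhds.mono fun t ht => ht.mono fun s hs => le_antisymm hs.2 hs.1
  have hzero : g' =ᶠ[𝓝 a] fun _ => 0 := by
    filter_upwards [hg, hconst] with t ht hct
    exact ht.unique ((hasDerivAt_const t (g a)).congr_of_eventuallyEq hct)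
  exact hc.ne ((hg'.congr_of_eventuallyEq hzero.symm).unique (hasDerivAt_const a 0))

theorem fderiv_fderiv_apply_self_nonneg {F : Type*} [NormedAddCommGroup F] [NormedSpace ℝ F]
    {w : F → ℝ} {x : F} (hw : ContDiffAt ℝ 2 w x)
    (hsupp : ∀ᶠ y in 𝓝 x, w x + fderiv ℝ w x (y - x) ≤ w y) (u : F) :
    0 ≤ fderiv ℝ (fderiv ℝ w) x u u := by
  set γ : ℝ → F := fun t => x + t • u
  have hγ : ∀ t, HasDerivAt γ u t := fun t => by
    simpa only [id, one_smul] using ((hasDerivAt_id t).smul_const u).const_add x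
  have hγ0 : γ 0 = x := by simp [γ]
  have hγx : Tendsto γ (𝓝 0) (𝓝 x) := hγ0 ▸ (hγ 0).continuousAt.tendsto
  have hmin : IsLocalMin (fun t => w (γ t) - t * fderiv ℝ w x u) 0 := by
    filter_upwards [hγx.eventually hsupp] with t ht
    simp only [γ, add_sub_cancel_left, map_smul, smul_eq_mul] at ht ⊢
    simp only [zero_smul, add_zero, zero_mul, sub_zero]
    linarith
  have hderiv : ∀ᶠ t in 𝓝 (0 : ℝ), HasDerivAt (fun t => w (γ t) - t * fderiv ℝ w x u)
      (fderiv ℝ w (γ t) u - fderiv ℝ w x u) t := by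
    filter_upwards [hγx.eventually (hw.eventually (by simp))] with t ht
    exact ((ht.differentiableAt (by simp)).hasFDerivAt.comp_hasDerivAt t (hγ t)).sub
      (hasDerivAt_mul_const _)
  have hderiv2 : HasDerivAt (fun t => fderiv ℝ w (γ t) u - fderiv ℝ w x u)
      (fderiv ℝ (fderiv ℝ w) x u u) 0 := by
    have h := ((hw.fderiv_right (m := 1) le_rfl).differentiableAt one_ne_zero).hasFDerivAt
    simpa using ((ContinuousLinearMap.apply ℝ ℝ u).hasFDerivAt.comp_hasDerivAt 0
      (h.comp_hasDerivAt_of_eq 0 (hγ 0) hγ0.symm)).sub_const (fderiv ℝ w x u)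
  exact hmin.nonneg_of_hasDerivAt_of_hasDerivAt hderiv hderiv2

theorem LinearMap.IsPositive.det_nonneg {F : Type*} [NormedAddCommGroup F]
    [InnerProductSpace ℝ F] [FiniteDimensional ℝ F] {T : F →ₗ[ℝ] F} (hT : T.IsPositive) :
    0 ≤ T.det := by
  classical
  rw [← LinearMap.det_toMatrix (stdOrthonormalBasis ℝ F).toBasis]
  exact ((LinearMap.posSemidef_toMatrix_iff _).2 hT).det_nonneg

section Gradient

variable {F : Type*} [NormedAddCommGroup F] [InnerProductSpace ℝ F] [CompleteSpace F]
  {w : F → ℝ} {x : F}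

theorem norm_gradient (w : F → ℝ) (x : F) : ‖∇ w x‖ = ‖fderiv ℝ w x‖ :=
  (toDual ℝ F).symm.norm_map _

theorem measurable_gradient [MeasurableSpace F] [BorelSpace F] (w : F → ℝ) :
    Measurable (∇ w) :=
  (toDual ℝ F).symm.continuous.measurable.comp (measurable_fderiv ℝ w)

-- Over `ℝ` the Riesz isomorphism `toDual` is linear, so `∇ w` is `fderiv ℝ w` followed by a
-- continuous linear map.
theorem hasFDerivAt_gradient (hw : ContDiffAt ℝ 2 w x) :
    HasFDerivAt (∇ w) ((toDual ℝ F).symm.toContinuousLinearEquiv.toContinuousLinearMap.comp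
      (fderiv ℝ (fderiv ℝ w) x)) x :=
  (toDual ℝ F).symm.toContinuousLinearEquiv.toContinuousLinearMap.hasFDerivAt.comp x
    ((hw.fderiv_right (m := 1) le_rfl).differentiableAt one_ne_zero).hasFDerivAt

theorem ContDiffAt.gradient (hw : ContDiffAt ℝ 2 w x) : ContDiffAt ℝ 1 (∇ w) x :=
  (toDual ℝ F).symm.toContinuousLinearEquiv.toContinuousLinearMap.contDiff.contDiffAt.comp x
    (hw.fderiv_right le_rfl)

theorem inner_fderiv_gradient_apply (hw : ContDiffAt ℝ 2 w x) (u v : F) :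
    ⟪fderiv ℝ (∇ w) x u, v⟫ = fderiv ℝ (fderiv ℝ w) x u v := by
  rw [(hasFDerivAt_gradient hw).fderiv]
  exact toDual_symm_apply

theorem isPositive_fderiv_gradient (hw : ContDiffAt ℝ 2 w x)
    (hsupp : ∀ᶠ y in 𝓝 x, w x + fderiv ℝ w x (y - x) ≤ w y) :
    (fderiv ℝ (∇ w) x : F →ₗ[ℝ] F).IsPositive := by
  refine (LinearMap.isPositive_iff _).2 ⟨fun u v => ?_, fun u => ?_⟩
  · rw [ContinuousLinearMap.coe_coe, real_inner_comm _ u,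
      inner_fderiv_gradient_apply hw, inner_fderiv_gradient_apply hw]
    exact (hw.isSymmSndFDerivAt (by simp)).eq u v
  · rw [ContinuousLinearMap.coe_coe, inner_fderiv_gradient_apply hw]
    exact fderiv_fderiv_apply_self_nonneg hw hsupp u

end Gradient

theorem det_of_fderiv_coord_eq_det_fderiv {ι : Type*} [Fintype ι] [DecidableEq ι]
    {G : EuclideanSpace ℝ ι → EuclideanSpace ℝ ι} {x : EuclideanSpace ℝ ι}
    (hG : DifferentiableAt ℝ G x) :
    (Matrix.of fun i j => fderiv ℝ (fun z => G z j) x (EuclideanSpace.single i 1)).det =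
      (fderiv ℝ G x).det := by
  have hcoord (j : ι) : fderiv ℝ (fun z => G z j) x = PiLp.proj 2 _ j ∘L fderiv ℝ G x :=
    ((PiLp.hasFDerivAt_apply (𝕜 := ℝ) 2 (G x) j).comp x hG.hasFDerivAt).fderiv
  rw [ContinuousLinearMap.det, ← LinearMap.det_toMatrix (EuclideanSpace.basisFun ι ℝ).toBasis,
    ← Matrix.det_transpose]
  congr 1
  ext i j
  simp [hcoord, LinearMap.toMatrix_apply]

theorem det_hessian_eq_det_fderiv_gradient {ι : Type*} [Fintype ι] [DecidableEq ι]
    {w : EuclideanSpace ℝ ι → ℝ} {x : EuclideanSpace ℝ ι} (hw : DifferentiableAt ℝ (∇ w) x) :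
    (Matrix.of fun i j => fderiv ℝ (fun z => fderiv ℝ w z (EuclideanSpace.single j 1)) x
      (EuclideanSpace.single i 1)).det = (fderiv ℝ (∇ w) x).det := by
  have hcoord (j : ι) : (fun z => fderiv ℝ w z (EuclideanSpace.single j 1)) = fun z => ∇ w z j :=
    funext fun z => by simp [← inner_gradient_left, EuclideanSpace.inner_single_right]
  simp_rw [hcoord]
  exact det_of_fderiv_coord_eq_det_fderiv hw

section Legendre

variable {F : Type*} [NormedAddCommGroup F] [InnerProductSpace ℝ F] {s : Set F} {w : F → ℝ}
  {v x : F}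

-- `sSup` gives the junk value `0` where the supremum does not exist.
noncomputable def legendreOn (s : Set F) (w : F → ℝ) (v : F) : ℝ :=
  sSup ((fun z => ⟪v, z⟫ - w z) '' s)

theorem inner_sub_le_legendreOn (hs : IsBounded s) (hw : BddBelow (w '' s)) (hx : x ∈ s)
    (v : F) : ⟪v, x⟫ - w x ≤ legendreOn s w v := by
  refine le_csSup ?_ (mem_image_of_mem _ hx)
  obtain ⟨R, hR⟩ := hs.exists_norm_le
  obtain ⟨m, hm⟩ := hw
  refine ⟨‖v‖ * R - m, ?_⟩
  rintro _ ⟨z, hz, rfl⟩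
  have := hm (mem_image_of_mem w hz)
  have := (real_inner_le_norm v z).trans (mul_le_mul_of_nonneg_left (hR z hz) (norm_nonneg v))
  linarith

theorem legendreOn_eq_of_forall_le (hx : x ∈ s) (hsupp : ∀ z ∈ s, w x + ⟪v, z - x⟫ ≤ w z) :
    legendreOn s w v = ⟪v, x⟫ - w x := by
  refine IsGreatest.csSup_eq ⟨mem_image_of_mem _ hx, ?_⟩
  rintro _ ⟨z, hz, rfl⟩
  have := hsupp z hz
  rw [inner_sub_right] at this
  linarith

theorem lipschitzWith_legendreOn {K : ℝ≥0} (hK : ∀ z ∈ s, ‖z‖ ≤ K) (hne : s.Nonempty)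
    (hw : BddBelow (w '' s)) : LipschitzWith K (legendreOn s w) := by
  have hs : IsBounded s := isBounded_iff_forall_norm_le.2 ⟨K, hK⟩
  refine LipschitzWith.of_le_add_mul K fun a b => csSup_le (hne.image _) ?_
  rintro _ ⟨z, hz, rfl⟩
  have h₁ := inner_sub_le_legendreOn hs hw hz b
  have h₂ := (real_inner_le_norm (a - b) z).trans
    (mul_le_mul_of_nonneg_left (hK z hz) (norm_nonneg _))
  rw [inner_sub_left] at h₂
  rw [dist_eq_norm]
  linarith

theorem ae_differentiableAt_legendreOn [FiniteDimensional ℝ F] [MeasurableSpace F] [BorelSpace F]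
    (μ : Measure F) [μ.IsAddHaarMeasure] (hs : IsBounded s) (hne : s.Nonempty)
    (hw : BddBelow (w '' s)) : ∀ᵐ v ∂μ, DifferentiableAt ℝ (legendreOn s w) v := by
  obtain ⟨R, hR⟩ := hs.exists_norm_le
  exact (lipschitzWith_legendreOn (K := R.toNNReal)
    (fun z hz => (hR z hz).trans (Real.le_coe_toNNReal R)) hne hw).ae_differentiableAt

theorem fderiv_legendreOn_eq (hs : IsBounded s) (hw : BddBelow (w '' s))
    (hd : DifferentiableAt ℝ (legendreOn s w) v) (hx : x ∈ s)
    (hsupp : ∀ z ∈ s, w x + ⟪v, z - x⟫ ≤ w z) :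
    fderiv ℝ (legendreOn s w) v = innerSL ℝ x := by
  have hmin : IsLocalMin (fun u => legendreOn s w u - innerSL ℝ x u) v :=
    Eventually.of_forall fun u => by
      have := inner_sub_le_legendreOn hs hw hx u
      simp only [innerSL_apply_apply, legendreOn_eq_of_forall_le hx hsupp]
      linarith [real_inner_comm x u, real_inner_comm x v]
  exact sub_eq_zero.1 (hmin.hasFDerivAt_eq_zero (hd.hasFDerivAt.sub (innerSL ℝ x).hasFDerivAt))

theorem eq_of_forall_le_of_differentiableAt_legendreOn (hs : IsBounded s) (hw : BddBelow (w '' s))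
    (hd : DifferentiableAt ℝ (legendreOn s w) v) {y : F} (hx : x ∈ s) (hy : y ∈ s)
    (hsx : ∀ z ∈ s, w x + ⟪v, z - x⟫ ≤ w z) (hsy : ∀ z ∈ s, w y + ⟪v, z - y⟫ ≤ w z) :
    x = y := by
  have h := (fderiv_legendreOn_eq hs hw hd hx hsx).symm.trans (fderiv_legendreOn_eq hs hw hd hy hsy)
  exact ext_inner_right ℝ fun u => by simpa using DFunLike.congr_fun h u

end Legendre

theorem HasStrictFDerivAt.exists_isOpen_injOn {E : Type*} [NormedAddCommGroup E]
    [NormedSpace ℝ E] [FiniteDimensional ℝ E] {f : E → E} {A : E →L[ℝ] E} {x : E}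
    (hf : HasStrictFDerivAt f A x) (hA : A.det ≠ 0) : ∃ U, IsOpen U ∧ x ∈ U ∧ InjOn f U := by
  have hf' : HasStrictFDerivAt f (A.toContinuousLinearEquivOfDetNeZero hA : E →L[ℝ] E) x := by
    simpa using hf
  exact ⟨_, (hf'.toOpenPartialHomeomorph f).open_source, hf'.mem_toOpenPartialHomeomorph_source,
    (hf'.toOpenPartialHomeomorph f).injOn⟩

section AreaFormula

variable {E : Type*} [NormedAddCommGroup E] [NormedSpace ℝ E] [FiniteDimensional ℝ E]
  [MeasurableSpace E] [BorelSpace E] (μ : Measure E) [μ.IsAddHaarMeasure]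
  {f : E → E} {f' : E → E →L[ℝ] E} {s : Set E}

theorem lintegral_abs_det_fderiv_eq_zero_of_addHaar_image_eq_zero (hs : MeasurableSet s)
    (hf : ∀ x ∈ s, HasStrictFDerivAt f (f' x) x) (hf' : Measurable f')
    (hnull : μ (f '' s) = 0) : ∫⁻ x in s, ENNReal.ofReal |(f' x).det| ∂μ = 0 := by
  set t := s ∩ {x | (f' x).det ≠ 0}
  have hdet : MeasurableSet {x | (f' x).det ≠ 0} :=
    (ContinuousLinearMap.continuous_det.measurable.comp hf') (measurableSet_singleton 0).compl
  have hoff : ∫⁻ x in s \ {x | (f' x).det ≠ 0}, ENNReal.ofReal |(f' x).det| ∂μ = 0 :=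
    setLIntegral_eq_zero (hs.diff hdet) fun x hx => by simp [not_not.1 hx.2]
  -- Near a point of `t` the inverse function theorem makes `f` injective, so there the area
  -- formula applies; countably many such neighbourhoods cover `t`.
  choose! U hUo hxU hUinj using fun x (hx : x ∈ t) => (hf x hx.1).exists_isOpen_injOn hx.2
  obtain ⟨T, hTt, hTc, hcover⟩ := TopologicalSpace.countable_cover_nhdsWithin fun x hx =>
    mem_nhdsWithin_of_mem_nhds ((hUo x hx).mem_nhds (hxU x hx))
  have hpiece : ∀ x : T, ∫⁻ y in t ∩ U x, ENNReal.ofReal |(f' y).det| ∂μ = 0 := by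
    rintro ⟨x, hx⟩
    rw [lintegral_abs_det_fderiv_eq_addHaar_image μ
      ((hs.inter hdet).inter (hUo x (hTt hx)).measurableSet)
      (fun y hy => (hf y hy.1.1).hasFDerivAt.hasFDerivWithinAt)
      ((hUinj x (hTt hx)).mono inter_subset_right)]
    exact measure_mono_null (image_mono (inter_subset_left.trans inter_subset_left)) hnull
  have : Countable T := hTc.to_subtype
  have hon : ∫⁻ x in t, ENNReal.ofReal |(f' x).det| ∂μ = 0 := by
    refine le_antisymm ?_ bot_le
    calc ∫⁻ x in t, ENNReal.ofReal |(f' x).det| ∂μ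
        ≤ ∫⁻ x in ⋃ y : T, t ∩ U y, ENNReal.ofReal |(f' x).det| ∂μ :=
          lintegral_mono_set fun x hx => by
            obtain ⟨y, hyT, hxy⟩ := mem_iUnion₂.1 (hcover hx)
            exact mem_iUnion.2 ⟨⟨y, hyT⟩, hx, hxy⟩
      _ ≤ ∑' y : T, ∫⁻ x in t ∩ U y, ENNReal.ofReal |(f' x).det| ∂μ := lintegral_iUnion_le _ _
      _ = 0 := by simp [hpiece]
  rw [← lintegral_inter_add_sdiff _ s hdet, hon, hoff, add_zero]

theorem lintegral_abs_det_fderiv_eq_addHaar_image_of_ae_injOn (hs : MeasurableSet s)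
    (hf : ∀ x ∈ s, HasStrictFDerivAt f (f' x) x) (hfm : Measurable f) (hf' : Measurable f')
    (hinj : ∀ᵐ y ∂μ, ∀ x ∈ s, ∀ x' ∈ s, f x = y → f x' = y → x = x') :
    ∫⁻ x in s, ENNReal.ofReal |(f' x).det| ∂μ = μ (f '' s) := by
  obtain ⟨N, hbad, hN, hN0⟩ := exists_measurable_superset_of_null (ae_iff.1 hinj)
  have hinjOn : InjOn f (s \ f ⁻¹' N) := fun x hx x' hx' hxx' => by
    by_contra hne
    exact hx.2 (hbad fun h => hne (h x hx.1 x' hx'.1 rfl hxx'.symm))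
  have hnull : ∫⁻ x in s ∩ f ⁻¹' N, ENNReal.ofReal |(f' x).det| ∂μ = 0 :=
    lintegral_abs_det_fderiv_eq_zero_of_addHaar_image_eq_zero μ (hs.inter (hfm hN))
      (fun x hx => hf x hx.1) hf' (measure_mono_null (image_subset_iff.2 inter_subset_right) hN0)
  have himage : μ (f '' s) = μ (f '' (s \ f ⁻¹' N)) := by
    refine le_antisymm ?_ (measure_mono (image_mono sdiff_subset))
    calc μ (f '' s) ≤ μ (f '' (s \ f ⁻¹' N) ∪ N) := by
          refine measure_mono ?_
          rintro _ ⟨x, hx, rfl⟩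
          by_cases h : f x ∈ N
          · exact Or.inr h
          · exact Or.inl ⟨x, ⟨hx, h⟩, rfl⟩
      _ ≤ μ (f '' (s \ f ⁻¹' N)) + μ N := measure_union_le _ _
      _ = μ (f '' (s \ f ⁻¹' N)) := by rw [hN0, add_zero]
  rw [← lintegral_inter_add_sdiff _ s (hfm hN), hnull, zero_add, himage]
  exact lintegral_abs_det_fderiv_eq_addHaar_image μ (hs.diff (hfm hN))
    (fun x hx => (hf x hx.1).hasFDerivAt.hasFDerivWithinAt) hinjOn

end AreaFormula

theorem exists_fderiv_eq_of_norm_mul_lt {F : Type*} [NormedAddCommGroup F] [NormedSpace ℝ F]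
    [ProperSpace F] {Ω : Set F} (hΩ : IsOpen Ω) (hΩbd : IsBounded Ω) {w : F → ℝ}
    (hw : DifferentiableOn ℝ w Ω) (hwc : ContinuousOn w (closure Ω)) {x₀ : F} (hx₀ : x₀ ∈ Ω)
    {ε d : ℝ} (hε : ∀ x ∈ frontier Ω, w x₀ + ε ≤ w x) (hd : ∀ x ∈ frontier Ω, ‖x - x₀‖ ≤ d)
    {φ : StrongDual ℝ F} (hφ : ‖φ‖ * d < ε) :
    ∃ x ∈ Ω, fderiv ℝ w x = φ ∧ ∀ y ∈ Ω, w x + φ (y - x) ≤ w y := by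
  obtain ⟨x, hxcl, hmin⟩ := hΩbd.isCompact_closure.exists_isMinOn ⟨x₀, subset_closure hx₀⟩
    (hwc.sub φ.continuous.continuousOn)
  have hmin_le : ∀ y ∈ Ω, w x - φ x ≤ w y - φ y := fun y hy => hmin (subset_closure hy)
  -- On the boundary `w - φ` exceeds its value at `x₀`, so the minimum is attained inside.
  have hxΩ : x ∈ Ω := by
    by_contra hxΩ
    have hfr : x ∈ frontier Ω := ⟨hxcl, by rwa [hΩ.interior_eq]⟩
    have hφx : φ (x - x₀) ≤ ‖φ‖ * d :=
      (φ.le_opNorm _).trans' (le_abs_self _) |>.trans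
        (mul_le_mul_of_nonneg_left (hd x hfr) (norm_nonneg φ))
    have := hmin_le x₀ hx₀
    have := hε x hfr
    rw [map_sub] at hφx
    linarith
  refine ⟨x, hxΩ, ?_, fun y hy => ?_⟩
  · have hloc : IsLocalMin (fun y => w y - φ y) x :=
      hmin.isLocalMin (mem_of_superset (hΩ.mem_nhds hxΩ) subset_closure)
    exact sub_eq_zero.1 <| hloc.hasFDerivAt_eq_zero
      ((hw.differentiableAt (hΩ.mem_nhds hxΩ)).hasFDerivAt.sub φ.hasFDerivAt)
  · have := hmin_le y hy
    rw [map_sub]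
    linarith

section LowerContactSet

def lowerContactSet {F : Type*} [NormedAddCommGroup F] [NormedSpace ℝ F] (Ω : Set F)
    (w : F → ℝ) (r : ℝ) : Set F :=
  {x | x ∈ Ω ∧ ‖fderiv ℝ w x‖ < r ∧ ∀ y ∈ Ω, w x + fderiv ℝ w x (y - x) ≤ w y}

theorem measurableSet_lowerContactSet {F : Type*} [NormedAddCommGroup F] [NormedSpace ℝ F]
    [MeasurableSpace F] [OpensMeasurableSpace F] {Ω : Set F} (hΩ : IsOpen Ω) {w : F → ℝ}
    (hw : ContinuousOn w Ω) (hw' : ContinuousOn (fderiv ℝ w) Ω) (r : ℝ) :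
    MeasurableSet (lowerContactSet Ω w r) := by
  have hsmall : IsOpen (Ω ∩ (fun x => ‖fderiv ℝ w x‖) ⁻¹' Iio r) :=
    hw'.norm.isOpen_inter_preimage hΩ isOpen_Iio
  have hcut : ∀ y, IsOpen (Ω ∩ (fun x => w x + fderiv ℝ w x (y - x)) ⁻¹' Ioi (w y)) := fun y =>
    (hw.add (hw'.clm_apply (continuousOn_const.sub continuousOn_id))).isOpen_inter_preimage hΩ
      isOpen_Ioi
  convert hsmall.measurableSet.diff (isOpen_biUnion fun y (_ : y ∈ Ω) => hcut y).measurableSet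
    using 1
  ext x
  simp only [lowerContactSet, mem_ofPred_eq, Set.mem_sdiff, mem_inter_iff, mem_preimage, mem_Iio,
    mem_Ioi, mem_iUnion, exists_prop, not_exists, not_and, not_lt]
  tauto

variable {F : Type*} [NormedAddCommGroup F] [InnerProductSpace ℝ F] {Ω : Set F} {w : F → ℝ}

theorem image_gradient_lowerContactSet [ProperSpace F] (hΩ : IsOpen Ω) (hΩbd : IsBounded Ω)
    (hw : DifferentiableOn ℝ w Ω) (hwc : ContinuousOn w (closure Ω)) {x₀ : F} (hx₀ : x₀ ∈ Ω)
    {ε d : ℝ} (hε : ∀ x ∈ frontier Ω, w x₀ + ε ≤ w x) (hd : ∀ x ∈ frontier Ω, ‖x - x₀‖ ≤ d)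
    (hd0 : 0 < d) : ∇ w '' lowerContactSet Ω w (ε / d) = ball 0 (ε / d) := by
  refine Subset.antisymm ?_ fun v hv => ?_
  · rintro _ ⟨x, hx, rfl⟩
    rw [mem_ball_zero_iff, norm_gradient]
    exact hx.2.1
  · rw [mem_ball_zero_iff] at hv
    have hv' : ‖toDual ℝ F v‖ * d < ε := by
      rwa [LinearIsometryEquiv.norm_map, ← lt_div_iff₀ hd0]
    obtain ⟨x, hx, hDx, hsupp⟩ := exists_fderiv_eq_of_norm_mul_lt hΩ hΩbd hw hwc hx₀ hε hd hv'
    have hGx : ∇ w x = v := by rw [gradient, hDx, LinearIsometryEquiv.symm_apply_apply]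
    refine ⟨x, ⟨hx, ?_, hDx ▸ hsupp⟩, hGx⟩
    rwa [← norm_gradient, hGx]

theorem ae_injOn_gradient_lowerContactSet [FiniteDimensional ℝ F] [MeasurableSpace F]
    [BorelSpace F] (μ : Measure F) [μ.IsAddHaarMeasure] (hΩbd : IsBounded Ω) (hne : Ω.Nonempty)
    (hwc : ContinuousOn w (closure Ω)) (r : ℝ) :
    ∀ᵐ v ∂μ, ∀ x ∈ lowerContactSet Ω w r, ∀ x' ∈ lowerContactSet Ω w r,
      ∇ w x = v → ∇ w x' = v → x = x' := by
  have hbdd : BddBelow (w '' Ω) :=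
    (hΩbd.isCompact_closure.bddBelow_image hwc).mono (image_mono subset_closure)
  have hsupp : ∀ x ∈ lowerContactSet Ω w r, ∀ y ∈ Ω, w x + ⟪∇ w x, y - x⟫ ≤ w y :=
    fun x hx y hy => by simpa only [inner_gradient_left] using hx.2.2 y hy
  filter_upwards [ae_differentiableAt_legendreOn μ hΩbd hne hbdd] with v hv
  rintro x hx x' hx' rfl hxx'
  exact eq_of_forall_le_of_differentiableAt_legendreOn hΩbd hbdd hv hx.1 hx'.1 (hsupp x hx)
    (hxx' ▸ hsupp x' hx')

theorem det_fderiv_gradient_nonneg [FiniteDimensional ℝ F] (hΩ : IsOpen Ω)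
    (hw : ContDiffOn ℝ 2 w Ω) {r : ℝ} {x : F} (hx : x ∈ lowerContactSet Ω w r) :
    0 ≤ (fderiv ℝ (∇ w) x).det :=
  (isPositive_fderiv_gradient (hw.contDiffAt (hΩ.mem_nhds hx.1))
    (mem_of_superset (hΩ.mem_nhds hx.1) hx.2.2)).det_nonneg

theorem lintegral_det_fderiv_gradient_lowerContactSet [FiniteDimensional ℝ F]
    [MeasurableSpace F] [BorelSpace F] (μ : Measure F) [μ.IsAddHaarMeasure] (hΩ : IsOpen Ω)
    (hΩbd : IsBounded Ω) (hw : ContDiffOn ℝ 2 w Ω) (hwc : ContinuousOn w (closure Ω)) {x₀ : F}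
    (hx₀ : x₀ ∈ Ω) {ε d : ℝ} (hε : ∀ x ∈ frontier Ω, w x₀ + ε ≤ w x)
    (hd : ∀ x ∈ frontier Ω, ‖x - x₀‖ ≤ d) (hd0 : 0 < d) :
    ∫⁻ x in lowerContactSet Ω w (ε / d), ENNReal.ofReal (fderiv ℝ (∇ w) x).det ∂μ =
      μ (ball 0 (ε / d)) := by
  have hC2 : ∀ x ∈ Ω, ContDiffAt ℝ 2 w x := fun x hx => hw.contDiffAt (hΩ.mem_nhds hx)
  have hP := measurableSet_lowerContactSet hΩ hw.continuousOn
    (hw.continuousOn_fderiv_of_isOpen hΩ one_le_two) (ε / d)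
  rw [← image_gradient_lowerContactSet hΩ hΩbd (hw.differentiableOn two_ne_zero) hwc hx₀ hε hd
      hd0,
    ← lintegral_abs_det_fderiv_eq_addHaar_image_of_ae_injOn μ hP
      (fun x hx => (hC2 x hx.1).gradient.hasStrictFDerivAt one_ne_zero) (measurable_gradient w)
      (measurable_fderiv ℝ _) (ae_injOn_gradient_lowerContactSet μ hΩbd ⟨x₀, hx₀⟩ hwc _)]
  exact setLIntegral_congr_fun hP fun x hx => by
    rw [abs_of_nonneg (det_fderiv_gradient_nonneg hΩ hw hx)]

end LowerContactSet

theorem stmt_16_general (n : ℕ) (Ω : Set (EuclideanSpace ℝ (Fin n)))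
    (hΩopen : IsOpen Ω) (hΩbd : Bornology.IsBounded Ω)
    (w : EuclideanSpace ℝ (Fin n) → ℝ)
    (hw2 : ContDiffOn ℝ 2 w Ω) (hwc : ContinuousOn w (closure Ω))
    (x₀ : EuclideanSpace ℝ (Fin n)) (hx₀ : x₀ ∈ Ω)
    (ε : ℝ) (hε : 0 < ε) (hεle : ∀ x ∈ frontier Ω, w x₀ + ε ≤ w x)
    (d : ℝ) (hd : IsGreatest ((fun x => ‖x - x₀‖) '' frontier Ω) d) :
    (volume (Metric.ball (0 : EuclideanSpace ℝ (Fin n)) 1)).toReal / d ^ n * ε ^ n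
      ≤ ∫ x in {x | x ∈ Ω ∧ ‖fderiv ℝ w x‖ < ε / d ∧
            ∀ y ∈ Ω, w x + fderiv ℝ w x (y - x) ≤ w y},
          Matrix.det (Matrix.of fun i j : Fin n =>
            fderiv ℝ (fun z => fderiv ℝ w z (EuclideanSpace.single j 1)) x
              (EuclideanSpace.single i 1)) := by
  obtain ⟨z₀, hz₀, hz₀d⟩ := hd.1
  have hd0 : 0 < d := by
    rw [← hz₀d, norm_pos_iff, sub_ne_zero]
    rintro rfl
    exact hz₀.2 (by rwa [hΩopen.interior_eq])
  change _ ≤ ∫ x in lowerContactSet Ω w (ε / d), _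
  have hP := measurableSet_lowerContactSet hΩopen hw2.continuousOn
    (hw2.continuousOn_fderiv_of_isOpen hΩopen one_le_two) (ε / d)
  rw [setIntegral_congr_fun hP fun x hx => det_hessian_eq_det_fderiv_gradient
      ((hw2.contDiffAt (hΩopen.mem_nhds hx.1)).gradient.differentiableAt one_ne_zero),
    integral_eq_lintegral_of_nonneg_ae
      ((ae_restrict_iff' hP).2 (ae_of_all _ fun x hx => det_fderiv_gradient_nonneg hΩopen hw2 hx))
      (ContinuousLinearMap.continuous_det.measurable.comp
        (measurable_fderiv ℝ _)).aestronglyMeasurable,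
    lintegral_det_fderiv_gradient_lowerContactSet volume hΩopen hΩbd hw2 hwc hx₀ hεle
      (fun z hz => hd.2 ⟨z, hz, rfl⟩) hd0,
    Measure.addHaar_ball_of_pos _ _ (div_pos hε hd0), finrank_euclideanSpace_fin,
    ENNReal.toReal_mul, ENNReal.toReal_ofReal (by positivity), div_pow]
  exact le_of_eq (by ring)

theorem stmt_16 (n : ℕ) (hn : 0 < n) (Ω : Set (EuclideanSpace ℝ (Fin n)))
    (hΩopen : IsOpen Ω) (hΩbd : Bornology.IsBounded Ω)
    (w : EuclideanSpace ℝ (Fin n) → ℝ)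
    (hw2 : ContDiffOn ℝ 2 w Ω) (hwc : ContinuousOn w (closure Ω))
    (x₀ : EuclideanSpace ℝ (Fin n)) (hx₀ : x₀ ∈ Ω)
    (ε : ℝ) (hε : 0 < ε) (hεle : ∀ x ∈ frontier Ω, w x₀ + ε ≤ w x)
    (d : ℝ) (hd : IsGreatest ((fun x => ‖x - x₀‖) '' frontier Ω) d) :
    (volume (Metric.ball (0 : EuclideanSpace ℝ (Fin n)) 1)).toReal / d ^ n * ε ^ n
      ≤ ∫ x in {x | x ∈ Ω ∧ ‖fderiv ℝ w x‖ < ε / d ∧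
            ∀ y ∈ Ω, w x + fderiv ℝ w x (y - x) ≤ w y},
          Matrix.det (Matrix.of fun i j : Fin n =>
            fderiv ℝ (fun z => fderiv ℝ w z (EuclideanSpace.single j 1)) x
              (EuclideanSpace.single i 1)) :=
  stmt_16_general n Ω hΩopen hΩbd w hw2 hwc x₀ hx₀ ε hε hεle d hd
end
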